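/- arXiv:math/0607372 — 4 statements merged into one kernel-verified Lean document; each statement's English description precedes it below -/
import Mathlib

section
/- β maps ker φ onto ker ψ. That is, every ℤ-linear relation among the invariants X_Ω (Ω ranging over directed graphs on {1,…,k} of multidegree w) is the image under the clump-contraction map β of a ℤ-linear relation among the invariants X_Γ (Γ ranging over perfect matchings on {1,…,n}). (Reduction of relations to the equilateral case.) -/
open MvPolynomial

/-- A directed multigraph on the vertex set `Fin n`: a multiset of ordered pairs
(multiple edges allowed). -/
abbrev DGraph (n : ℕ) := Multiset (Fin n × Fin n)

/-- `Γ` has no loops. -/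
def DGraph.loopless {n : ℕ} (Γ : DGraph n) : Prop := ∀ e ∈ Γ, e.1 ≠ e.2

/-- The multidegree (valence) of `Γ` at the vertex `v`: the number of edges of `Γ`
incident to `v`, counted with multiplicity. -/
def DGraph.mdeg {n : ℕ} (Γ : DGraph n) (v : Fin n) : ℕ :=
  Multiset.countP (fun e => e.1 = v) Γ + Multiset.countP (fun e => e.2 = v) Γ

/-- A perfect matching on `{1,…,n}`: a directed graph of multidegree `(1,…,1)`.
(Multidegree one everywhere forces looplessness.) -/
def DGraph.isPM {n : ℕ} (Γ : DGraph n) : Prop := ∀ v, Γ.mdeg v = 1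

/-- The invariant `X_Γ = ∏_{(i,j) ∈ Γ} (u_j v_i - u_i v_j)`, where the variable
`Sum.inl i` plays the role of `u_i` and `Sum.inr i` plays the role of `v_i`. -/
noncomputable def XG {n : ℕ} (Γ : DGraph n) : MvPolynomial (Fin n ⊕ Fin n) ℤ :=
  (Γ.map (fun e => X (Sum.inl e.2) * X (Sum.inr e.1) - X (Sum.inl e.1) * X (Sum.inr e.2))).prod

/-- Perfect matchings on `{1,…,n}`. -/
abbrev PM (n : ℕ) := {Γ : DGraph n // Γ.isPM}

/-- Directed graphs on `{1,…,k}` of multidegree `w`. -/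
abbrev GraphOfDeg {k : ℕ} (w : Fin k → ℕ) := {Ω : DGraph k // Ω.loopless ∧ ∀ v, Ω.mdeg v = w v}

/-- `φ : F_n → ℤ[u,v]`, the `ℤ`-linear map on the free `ℤ`-module on the perfect
matchings of `{1,…,n}` sending the basis element of `Γ` to `X_Γ`. -/
noncomputable def phiMap (n : ℕ) :
    (PM n →₀ ℤ) →ₗ[ℤ] MvPolynomial (Fin n ⊕ Fin n) ℤ :=
  Finsupp.lift _ ℤ _ (fun Γ => XG Γ.val)

/-- `ψ : F_w → ℤ[u,v]`, the `ℤ`-linear map on the free `ℤ`-module on the directed graphs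
on `{1,…,k}` of multidegree `w` sending the basis element of `Ω` to `X_Ω`. -/
noncomputable def psiMap {k : ℕ} (w : Fin k → ℕ) :
    (GraphOfDeg w →₀ ℤ) →ₗ[ℤ] MvPolynomial (Fin k ⊕ Fin k) ℤ :=
  Finsupp.lift _ ℤ _ (fun Ω => XG Ω.val)

attribute [local instance] Classical.propDecidable

/-- The clump-contraction map `β : F_n → F_w`: the basis element of a perfect matching
`Γ` is sent to the basis element of the contracted graph `{(c i, c j) : (i,j) ∈ Γ}` if no
edge of `Γ` has both endpoints in a single clump (fiber of `c`), and to `0` otherwise.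
(The contracted graph then automatically lies in `G_w`; this is recorded in the second
component of the condition of the `dite`.) -/
noncomputable def betaMap {n k : ℕ} (w : Fin k → ℕ) (c : Fin n → Fin k) :
    (PM n →₀ ℤ) →ₗ[ℤ] (GraphOfDeg w →₀ ℤ) :=
  Finsupp.lift _ ℤ _ (fun Γ : PM n =>
    if h : (∀ e ∈ Γ.val, c e.1 ≠ c e.2) ∧
        (DGraph.loopless (Γ.val.map (fun e => (c e.1, c e.2))) ∧
          ∀ v, DGraph.mdeg (Γ.val.map (fun e => (c e.1, c e.2))) v = w v)
    then Finsupp.single ⟨Γ.val.map (fun e => (c e.1, c e.2)), h.2⟩ 1 else 0)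


section Poly
open Sum

variable {k : ℕ}

noncomputable def edgeF (e : Fin k × Fin k) : MvPolynomial (Fin k ⊕ Fin k) ℤ :=
  X (Sum.inl e.2) * X (Sum.inr e.1) - X (Sum.inl e.1) * X (Sum.inr e.2)

lemma XG_eq (Γ : DGraph k) : XG Γ = (Γ.map edgeF).prod := rfl

lemma XG_zero : XG (0 : DGraph k) = 1 := by simp [XG_eq]

lemma XG_cons (e : Fin k × Fin k) (s : DGraph k) : XG (e ::ₘ s) = edgeF e * XG s := by
  simp [XG_eq, Multiset.map_cons, Multiset.prod_cons]

noncomputable def topE (e : Fin k × Fin k) : (Fin k ⊕ Fin k) →₀ ℕ :=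
  Finsupp.single (inl e.2) 1 + Finsupp.single (inr e.1) 1

noncomputable def botE (e : Fin k × Fin k) : (Fin k ⊕ Fin k) →₀ ℕ :=
  Finsupp.single (inl e.1) 1 + Finsupp.single (inr e.2) 1

lemma edgeF_eq (e : Fin k × Fin k) :
    edgeF e = monomial (topE e) 1 - monomial (botE e) 1 := by
  rw [edgeF, topE, botE, X, X, X, X, monomial_mul, monomial_mul, one_mul]

noncomputable def wtF (d : (Fin k ⊕ Fin k) →₀ ℕ) : ℕ := ∑ t : Fin k, d (inl t) * (t : ℕ)

lemma wtF_add (a b : (Fin k ⊕ Fin k) →₀ ℕ) : wtF (a + b) = wtF a + wtF b := by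
  simp [wtF, Finsupp.add_apply, add_mul, Finset.sum_add_distrib]

lemma wtF_topE (e : Fin k × Fin k) : wtF (topE e) = (e.2 : ℕ) := by
  simp [topE, wtF_add, wtF, Finsupp.single_apply]

lemma wtF_botE (e : Fin k × Fin k) : wtF (botE e) = (e.1 : ℕ) := by
  simp [botE, wtF_add, wtF, Finsupp.single_apply]

end Poly
section Poly2
open Sum
variable {k : ℕ}

noncomputable def MS (s : DGraph k) : (Fin k ⊕ Fin k) →₀ ℕ := (s.map topE).sum

def WS (s : DGraph k) : ℕ := (s.map fun e => ((e.2 : Fin k) : ℕ)).sum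

lemma MS_zero : MS (0 : DGraph k) = 0 := rfl
lemma WS_zero : WS (0 : DGraph k) = 0 := rfl

lemma MS_cons (e : Fin k × Fin k) (s : DGraph k) : MS (e ::ₘ s) = topE e + MS s := by
  simp [MS]

lemma WS_cons (e : Fin k × Fin k) (s : DGraph k) : WS (e ::ₘ s) = (e.2 : ℕ) + WS s := by
  simp [WS]

lemma wtF_MS (s : DGraph k) : wtF (MS s) = WS s := by
  induction s using Multiset.induction with
  | empty => simp [MS_zero, WS_zero, wtF]
  | cons e s ih => rw [MS_cons, WS_cons, wtF_add, wtF_topE, ih]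

lemma coeff_XG (s : DGraph k) (hs : ∀ e ∈ s, e.1 < e.2) :
    coeff (MS s) (XG s) = 1 ∧
    ∀ d, coeff d (XG s) ≠ 0 → wtF d ≤ WS s ∧ (wtF d = WS s → d = MS s) := by
  induction s using Multiset.induction with
  | empty =>
    constructor
    · simp [XG_zero, MS_zero]
    · intro d hd
      rw [XG_zero, coeff_one] at hd
      have hd0 : d = 0 := by by_contra h; simp [Ne.symm h] at hd
      subst hd0; simp [MS_zero, WS_zero, wtF]
  | cons e s ih =>
    have he : e.1 < e.2 := hs e (Multiset.mem_cons_self e s)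
    have hs' : ∀ f ∈ s, f.1 < f.2 := fun f hf => hs f (Multiset.mem_cons_of_mem hf)
    obtain ⟨ih1, ih2⟩ := ih hs'
    have key : ∀ d, coeff d (XG (e ::ₘ s)) =
        (if topE e ≤ d then coeff (d - topE e) (XG s) else 0)
        - (if botE e ≤ d then coeff (d - botE e) (XG s) else 0) := by
      intro d
      rw [XG_cons, edgeF_eq, sub_mul, coeff_sub, coeff_monomial_mul', coeff_monomial_mul']
      simp
    have wt_sub_top : ∀ d, topE e ≤ d → wtF d = (e.2 : ℕ) + wtF (d - topE e) := by
      intro d hle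
      conv_lhs => rw [← tsub_add_cancel_of_le hle]
      rw [wtF_add, wtF_topE, add_comm]
    have wt_sub_bot : ∀ d, botE e ≤ d → wtF d = (e.1 : ℕ) + wtF (d - botE e) := by
      intro d hle
      conv_lhs => rw [← tsub_add_cancel_of_le hle]
      rw [wtF_add, wtF_botE, add_comm]
    constructor
    · rw [key, MS_cons]
      have h1 : topE e ≤ topE e + MS s := le_add_of_nonneg_right zero_le
      rw [if_pos h1, add_tsub_cancel_left, ih1]
      have h2 : (if botE e ≤ topE e + MS s then coeff (topE e + MS s - botE e) (XG s) else 0) = 0 := by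
        split_ifs with hb
        · by_contra hne
          have := (ih2 _ hne).1
          have hw : wtF (topE e + MS s) = (e.1 : ℕ) + wtF (topE e + MS s - botE e) :=
            wt_sub_bot _ hb
          rw [wtF_add, wtF_topE, wtF_MS] at hw
          have : (e.1 : ℕ) < (e.2 : ℕ) := he
          omega
        · rfl
      rw [h2, sub_zero]
    · intro d hd
      rw [key] at hd
      rw [WS_cons, MS_cons]
      by_cases htop : topE e ≤ d ∧ coeff (d - topE e) (XG s) ≠ 0
      · obtain ⟨hle, hne⟩ := htop
        obtain ⟨hle2, heq2⟩ := ih2 _ hne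
        have hw := wt_sub_top d hle
        constructor
        · omega
        · intro hweq
          have : wtF (d - topE e) = WS s := by omega
          rw [← heq2 this, add_comm, tsub_add_cancel_of_le hle]
      · -- then the bot branch must be nonzero
        have hbot : botE e ≤ d ∧ coeff (d - botE e) (XG s) ≠ 0 := by
          by_contra hb
          apply hd
          rw [not_and_or] at htop hb
          have e1 : (if topE e ≤ d then coeff (d - topE e) (XG s) else 0) = 0 := by
            rcases htop with h | h
            · rw [if_neg h]
            · rw [not_not] at h; split_ifs <;> simp [h]
          have e2 : (if botE e ≤ d then coeff (d - botE e) (XG s) else 0) = 0 := by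
            rcases hb with h | h
            · rw [if_neg h]
            · rw [not_not] at h; split_ifs <;> simp [h]
          rw [e1, e2, sub_zero]
        obtain ⟨hle, hne⟩ := hbot
        obtain ⟨hle2, _⟩ := ih2 _ hne
        have hw := wt_sub_bot d hle
        have : (e.1 : ℕ) < (e.2 : ℕ) := he
        constructor
        · omega
        · intro hweq; omega
end Poly2
section Std
open Sum
variable {k : ℕ}

def Std (s : DGraph k) : Prop :=
  (∀ e ∈ s, e.1 < e.2) ∧ ∀ e ∈ s, ∀ f ∈ s, ¬(e.1 < f.1 ∧ f.2 < e.2)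

lemma MS_apply_inl (s : DGraph k) (t : Fin k) :
    MS s (inl t) = Multiset.countP (fun e => e.2 = t) s := by
  induction s using Multiset.induction with
  | empty => simp [MS_zero]
  | cons e s ih =>
    rw [MS_cons, Multiset.countP_cons, Finsupp.add_apply, ih, topE, Finsupp.add_apply]
    simp [Finsupp.single_apply]
    split_ifs <;> omega

lemma MS_apply_inr (s : DGraph k) (t : Fin k) :
    MS s (inr t) = Multiset.countP (fun e => e.1 = t) s := by
  induction s using Multiset.induction with
  | empty => simp [MS_zero]
  | cons e s ih =>
    rw [MS_cons, Multiset.countP_cons, Finsupp.add_apply, ih, topE, Finsupp.add_apply]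
    simp [Finsupp.single_apply]
    split_ifs <;> omega

lemma exists_min_fst (s : DGraph k) (hs : s ≠ 0) :
    ∃ e ∈ s, ∀ f ∈ s, e.1 ≤ f.1 := by
  obtain ⟨e₀, he₀⟩ := Multiset.exists_mem_of_ne_zero hs
  obtain ⟨e, he, hmin⟩ := Multiset.toFinset s |>.exists_min_image (fun e => e.1)
    ⟨e₀, Multiset.mem_toFinset.mpr he₀⟩
  exact ⟨e, Multiset.mem_toFinset.mp he, fun f hf => hmin f (Multiset.mem_toFinset.mpr hf)⟩

lemma exists_min_snd (s : DGraph k) (hs : s ≠ 0) :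
    ∃ e ∈ s, ∀ f ∈ s, e.2 ≤ f.2 := by
  obtain ⟨e₀, he₀⟩ := Multiset.exists_mem_of_ne_zero hs
  obtain ⟨e, he, hmin⟩ := Multiset.toFinset s |>.exists_min_image (fun e => e.2)
    ⟨e₀, Multiset.mem_toFinset.mpr he₀⟩
  exact ⟨e, Multiset.mem_toFinset.mp he, fun f hf => hmin f (Multiset.mem_toFinset.mpr hf)⟩

lemma std_min_mem (s : DGraph k) (hs : s ≠ 0) (hstd : Std s)
    (e f : Fin k × Fin k) (he : e ∈ s) (hf : f ∈ s)
    (hemin : ∀ g ∈ s, e.1 ≤ g.1) (hfmin : ∀ g ∈ s, f.2 ≤ g.2) :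
    (e.1, f.2) ∈ s := by
  have h := hstd.2 e he f hf
  by_cases h1 : e.1 < f.1
  · by_cases h2 : f.2 < e.2
    · exact absurd ⟨h1, h2⟩ h
    · have : e.2 = f.2 := le_antisymm (not_lt.mp h2) (hfmin e he)
      have : (e.1, f.2) = e := by rw [← this]
      rw [this]; exact he
  · have : e.1 = f.1 := le_antisymm (hemin f hf) (not_lt.mp h1)
    have : (e.1, f.2) = f := by rw [this]
    rw [this]; exact hf

lemma std_unique : ∀ (N : ℕ) (s₁ s₂ : DGraph k), Multiset.card s₁ = N →
    Std s₁ → Std s₂ →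
    (∀ t, Multiset.countP (fun e => e.1 = t) s₁ = Multiset.countP (fun e => e.1 = t) s₂) →
    (∀ t, Multiset.countP (fun e => e.2 = t) s₁ = Multiset.countP (fun e => e.2 = t) s₂) →
    s₁ = s₂ := by
  intro N
  induction N with
  | zero =>
    intro s₁ s₂ hcard _ _ h1 _
    have hs₁ : s₁ = 0 := Multiset.card_eq_zero.mp hcard
    subst hs₁
    by_contra hne
    obtain ⟨e, he⟩ := Multiset.exists_mem_of_ne_zero (Ne.symm hne)
    have := h1 e.1
    simp at this
    have hpos : 0 < Multiset.countP (fun f => f.1 = e.1) s₂ := by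
      rw [Multiset.countP_pos]; exact ⟨e, he, rfl⟩
    omega
  | succ N ih =>
    intro s₁ s₂ hcard hstd₁ hstd₂ h1 h2
    have hs₁ : s₁ ≠ 0 := by
      intro h; rw [h] at hcard; simp at hcard
    have hs₂ : s₂ ≠ 0 := by
      intro h
      obtain ⟨e, he⟩ := Multiset.exists_mem_of_ne_zero hs₁
      have := h1 e.1
      rw [h] at this; simp at this
      have hpos : 0 < Multiset.countP (fun f => f.1 = e.1) s₁ := by
        rw [Multiset.countP_pos]; exact ⟨e, he, rfl⟩
      omega
    -- minima agree between s₁ and s₂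
    obtain ⟨e₁, he₁, hemin₁⟩ := exists_min_fst s₁ hs₁
    obtain ⟨f₁, hf₁, hfmin₁⟩ := exists_min_snd s₁ hs₁
    obtain ⟨e₂, he₂, hemin₂⟩ := exists_min_fst s₂ hs₂
    obtain ⟨f₂, hf₂, hfmin₂⟩ := exists_min_snd s₂ hs₂
    -- cross inequalities via counts
    have cross1 : ∀ (a : DGraph k) (b : DGraph k),
        (∀ t, Multiset.countP (fun e => e.1 = t) a = Multiset.countP (fun e => e.1 = t) b) →
        ∀ g ∈ a, ∃ g' ∈ b, g'.1 = g.1 := by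
      intro a b hab g hg
      have : 0 < Multiset.countP (fun e => e.1 = g.1) b := by
        rw [← hab]
        rw [Multiset.countP_pos]; exact ⟨g, hg, rfl⟩
      rw [Multiset.countP_pos] at this
      obtain ⟨g', hg', hgg⟩ := this
      exact ⟨g', hg', hgg⟩
    have cross2 : ∀ (a : DGraph k) (b : DGraph k),
        (∀ t, Multiset.countP (fun e => e.2 = t) a = Multiset.countP (fun e => e.2 = t) b) →
        ∀ g ∈ a, ∃ g' ∈ b, g'.2 = g.2 := by
      intro a b hab g hg
      have : 0 < Multiset.countP (fun e => e.2 = g.2) b := by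
        rw [← hab]
        rw [Multiset.countP_pos]; exact ⟨g, hg, rfl⟩
      rw [Multiset.countP_pos] at this
      obtain ⟨g', hg', hgg⟩ := this
      exact ⟨g', hg', hgg⟩
    have hfsteq : e₁.1 = e₂.1 := by
      obtain ⟨g', hg', hg'e⟩ := cross1 s₁ s₂ h1 e₁ he₁
      obtain ⟨g'', hg'', hg''e⟩ := cross1 s₂ s₁ (fun t => (h1 t).symm) e₂ he₂
      have := hemin₂ g' hg'
      have := hemin₁ g'' hg''
      omega
    have hsndeq : f₁.2 = f₂.2 := by
      obtain ⟨g', hg', hg'e⟩ := cross2 s₁ s₂ h2 f₁ hf₁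
      obtain ⟨g'', hg'', hg''e⟩ := cross2 s₂ s₁ (fun t => (h2 t).symm) f₂ hf₂
      have := hfmin₂ g' hg'
      have := hfmin₁ g'' hg''
      omega
    set p : Fin k × Fin k := (e₁.1, f₁.2) with hp
    have hp₁ : p ∈ s₁ := std_min_mem s₁ hs₁ hstd₁ e₁ f₁ he₁ hf₁ hemin₁ hfmin₁
    have hp₂ : p ∈ s₂ := by
      have : (e₂.1, f₂.2) ∈ s₂ := std_min_mem s₂ hs₂ hstd₂ e₂ f₂ he₂ hf₂ hemin₂ hfmin₂
      rwa [hp, hfsteq, hsndeq]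
    obtain ⟨t₁, ht₁⟩ : ∃ t₁, s₁ = p ::ₘ t₁ := ⟨s₁.erase p, (Multiset.cons_erase hp₁).symm⟩
    obtain ⟨t₂, ht₂⟩ : ∃ t₂, s₂ = p ::ₘ t₂ := ⟨s₂.erase p, (Multiset.cons_erase hp₂).symm⟩
    subst ht₁; subst ht₂
    congr 1
    apply ih
    · simpa using hcard
    · exact ⟨fun e he => hstd₁.1 e (Multiset.mem_cons_of_mem he),
        fun e he f hf => hstd₁.2 e (Multiset.mem_cons_of_mem he) f (Multiset.mem_cons_of_mem hf)⟩
    · exact ⟨fun e he => hstd₂.1 e (Multiset.mem_cons_of_mem he),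
        fun e he f hf => hstd₂.2 e (Multiset.mem_cons_of_mem he) f (Multiset.mem_cons_of_mem hf)⟩
    · intro t
      have := h1 t
      rw [Multiset.countP_cons, Multiset.countP_cons] at this
      omega
    · intro t
      have := h2 t
      rw [Multiset.countP_cons, Multiset.countP_cons] at this
      omega
end Std
section Indep
variable {k : ℕ} {w : Fin k → ℕ}

lemma psiMap_apply (z : GraphOfDeg w →₀ ℤ) :
    psiMap w z = z.sum fun Ω a => a • XG Ω.val := by
  simp [psiMap, Finsupp.lift_apply]

lemma psi_indep (z : GraphOfDeg w →₀ ℤ)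
    (hsupp : ∀ Ω ∈ z.support, Std Ω.val) (hz : psiMap w z = 0) : z = 0 := by
  by_contra h
  obtain ⟨Ω₀, hΩ₀, hmax⟩ := Finset.exists_max_image z.support (fun Ω => WS Ω.val)
      (Finsupp.support_nonempty_iff.mpr h)
  have hcoeff : coeff (MS Ω₀.val) (psiMap w z) = z Ω₀ := by
    rw [psiMap_apply, Finsupp.sum, coeff_sum]
    rw [Finset.sum_eq_single Ω₀]
    · rw [coeff_smul, (coeff_XG Ω₀.val (hsupp Ω₀ hΩ₀).1).1]
      simp
    · intro Ω hΩ hne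
      rw [coeff_smul]
      have hstd := hsupp Ω hΩ
      by_cases hc0 : coeff (MS Ω₀.val) (XG Ω.val) = 0
      · rw [hc0]; simp
      · exfalso
        obtain ⟨hle, heq⟩ := (coeff_XG Ω.val hstd.1).2 _ hc0
        rw [wtF_MS] at hle heq
        have hW : WS Ω.val = WS Ω₀.val := le_antisymm (hmax Ω hΩ) hle
        have hMS : MS Ω₀.val = MS Ω.val := heq hW.symm
        have : Ω.val = Ω₀.val := std_unique (Multiset.card Ω.val) Ω.val Ω₀.val rfl hstd
          (hsupp Ω₀ hΩ₀)
          (fun t => by rw [← MS_apply_inr, ← MS_apply_inr, hMS])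
          (fun t => by rw [← MS_apply_inl, ← MS_apply_inl, hMS])
        exact hne (Subtype.ext this)
    · intro hnm; exact absurd hΩ₀ hnm
  rw [hz, coeff_zero] at hcoeff
  exact (Finsupp.mem_support_iff.mp hΩ₀) hcoeff.symm
end Indep
section Up
open Sum
variable {k n : ℕ} {w : Fin k → ℕ} {c : Fin n → Fin k}

def clump (c : Fin n → Fin k) (i : Fin k) : Finset (Fin n) :=
  Finset.univ.filter (fun v => c v = i)

lemma mem_clump {i : Fin k} {v : Fin n} : v ∈ clump c i ↔ c v = i := by simp [clump]

lemma sum_le_filter_eq (w : Fin k → ℕ) (i : Fin k) :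
    ∑ i' ∈ Finset.univ.filter (fun i' => i' ≤ i), w i'
      = (∑ i' ∈ Finset.univ.filter (fun i' => i' < i), w i') + w i := by
  have hins : Finset.univ.filter (fun i' => i' ≤ i)
      = insert i (Finset.univ.filter (fun i' => i' < i)) := by
    ext x
    simp only [Finset.mem_filter, Finset.mem_univ, true_and, Finset.mem_insert]
    constructor
    · intro hx
      rcases eq_or_lt_of_le hx with h | h
      · exact Or.inl h
      · exact Or.inr h
    · rintro (h | h)
      · exact le_of_eq h
      · exact le_of_lt h
  rw [hins, Finset.sum_insert (by simp)]
  ring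

variable (hn : n = ∑ i, w i)
  (hc : ∀ (j : Fin n) (i : Fin k), c j = i ↔
      (∑ i' ∈ Finset.univ.filter (fun i' => i' < i), w i') ≤ (j : ℕ) ∧
      (j : ℕ) < ∑ i' ∈ Finset.univ.filter (fun i' => i' ≤ i), w i')

include hn hc in
lemma clump_card (i : Fin k) : (clump c i).card = w i := by
  classical
  set a := ∑ i' ∈ Finset.univ.filter (fun i' => i' < i), w i' with ha
  have hb : ∑ i' ∈ Finset.univ.filter (fun i' => i' ≤ i), w i' = a + w i := sum_le_filter_eq w i
  have hbn : a + w i ≤ n := by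
    rw [← hb, hn]
    exact Finset.sum_le_sum_of_subset (Finset.filter_subset _ _)
  have hbound : ∀ r : Fin (w i), a + (r : ℕ) < n := fun r => by
    have := r.2; omega
  have himg : clump c i
      = Finset.image (fun r : Fin (w i) => (⟨a + (r : ℕ), hbound r⟩ : Fin n)) Finset.univ := by
    ext v
    simp only [mem_clump, Finset.mem_image, Finset.mem_univ, true_and]
    rw [hc v i, ← ha, hb]
    constructor
    · rintro ⟨h1, h2⟩
      refine ⟨⟨(v : ℕ) - a, by omega⟩, ?_⟩
      apply Fin.ext; simp; omega
    · rintro ⟨r, rfl⟩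
      have := r.2; simp
  rw [himg, Finset.card_image_of_injective _ (fun r s hrs => by
      apply Fin.ext
      have := congrArg Fin.val hrs
      simpa using this), Finset.card_univ, Fintype.card_fin]

lemma countP_comp_eq_sum (Γ : DGraph n) (g : Fin n × Fin n → Fin n) (i : Fin k) :
    Multiset.countP (fun E => c (g E) = i) Γ
      = ∑ v ∈ clump c i, Multiset.countP (fun E => g E = v) Γ := by
  induction Γ using Multiset.induction with
  | empty => simp
  | cons E Γ ih =>
    simp only [Multiset.countP_cons]
    rw [Finset.sum_add_distrib, ← ih]
    congr 1
    have : (∑ v ∈ clump c i, if g E = v then 1 else 0)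
        = if g E ∈ clump c i then 1 else 0 := Finset.sum_ite_eq (clump c i) (g E) (fun _ => 1)
    rw [this]
    simp [mem_clump]

include hn hc in
lemma mdeg_contract (Γ : DGraph n) (hΓ : Γ.isPM) (i : Fin k) :
    DGraph.mdeg (Γ.map (fun E => (c E.1, c E.2))) i = w i := by
  rw [DGraph.mdeg, Multiset.countP_map, Multiset.countP_map,
    ← Multiset.countP_eq_card_filter, ← Multiset.countP_eq_card_filter]
  show Multiset.countP (fun E : Fin n × Fin n => c E.1 = i) Γ
      + Multiset.countP (fun E : Fin n × Fin n => c E.2 = i) Γ = w i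
  have h1 : Multiset.countP (fun E : Fin n × Fin n => c E.1 = i) Γ
      = ∑ v ∈ clump c i, Multiset.countP (fun E : Fin n × Fin n => E.1 = v) Γ :=
    countP_comp_eq_sum Γ Prod.fst i
  have h2 : Multiset.countP (fun E : Fin n × Fin n => c E.2 = i) Γ
      = ∑ v ∈ clump c i, Multiset.countP (fun E : Fin n × Fin n => E.2 = v) Γ :=
    countP_comp_eq_sum Γ Prod.snd i
  rw [h1, h2, ← Finset.sum_add_distrib]
  have hone : ∀ v ∈ clump c i,
      Multiset.countP (fun E : Fin n × Fin n => E.1 = v) Γ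
        + Multiset.countP (fun E : Fin n × Fin n => E.2 = v) Γ = 1 := fun v _ => hΓ v
  rw [Finset.sum_congr rfl hone, Finset.sum_const, smul_eq_mul, mul_one, clump_card hn hc i]

end Up
section Lift
open Sum
variable {k n : ℕ} {w : Fin k → ℕ} {c : Fin n → Fin k}

lemma lift_aux :
    ∀ (Ω : Multiset (Fin k × Fin k)) (A : Fin k → Finset (Fin n)),
      (∀ e ∈ Ω, e.1 ≠ e.2) →
      (∀ i, (A i).card = Multiset.countP (fun e => e.1 = i) Ω
          + Multiset.countP (fun e => e.2 = i) Ω) →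
      (∀ i, ∀ x ∈ A i, c x = i) →
      ∃ Γ : DGraph n,
        Γ.map (fun E => (c E.1, c E.2)) = Ω ∧
        Γ.map Prod.fst + Γ.map Prod.snd = ∑ i, (A i).val := by
  intro Ω
  induction Ω using Multiset.induction with
  | empty =>
    intro A _ hcard _
    refine ⟨0, by simp, ?_⟩
    have hz : ∀ i, (A i).val = 0 := by
      intro i
      have := hcard i
      simp only [Multiset.countP_zero, add_zero] at this
      exact Finset.val_eq_zero.mpr (Finset.card_eq_zero.mp this)
    simp [hz]
  | cons e Ω ih =>
    intro A hloop hcard hfib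
    have hij : e.1 ≠ e.2 := hloop e (Multiset.mem_cons_self e Ω)
    have hAi : (A e.1).Nonempty := by
      rw [← Finset.card_pos, hcard e.1]
      have : 0 < Multiset.countP (fun f => f.1 = e.1) (e ::ₘ Ω) := by
        rw [Multiset.countP_pos]; exact ⟨e, Multiset.mem_cons_self e Ω, rfl⟩
      omega
    obtain ⟨x, hx⟩ := hAi
    have hAj : (A e.2).Nonempty := by
      rw [← Finset.card_pos, hcard e.2]
      have : 0 < Multiset.countP (fun f => f.2 = e.2) (e ::ₘ Ω) := by
        rw [Multiset.countP_pos]; exact ⟨e, Multiset.mem_cons_self e Ω, rfl⟩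
      omega
    obtain ⟨y, hy⟩ := hAj
    set A' : Fin k → Finset (Fin n) :=
      Function.update (Function.update A e.1 ((A e.1).erase x)) e.2 ((A e.2).erase y) with hA'
    have hA'1 : A' e.1 = (A e.1).erase x := by
      rw [hA', Function.update_of_ne hij, Function.update_self]
    have hA'2 : A' e.2 = (A e.2).erase y := by
      rw [hA', Function.update_self]
    have hA'other : ∀ i, i ≠ e.1 → i ≠ e.2 → A' i = A i := by
      intro i h1 h2
      rw [hA', Function.update_of_ne h2, Function.update_of_ne h1]
    have hcard' : ∀ i, (A' i).card = Multiset.countP (fun f => f.1 = i) Ω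
        + Multiset.countP (fun f => f.2 = i) Ω := by
      intro i
      have hc1 := hcard i
      rw [Multiset.countP_cons, Multiset.countP_cons] at hc1
      by_cases h1 : i = e.1
      · subst h1
        rw [hA'1, Finset.card_erase_of_mem hx]
        have hpos : 0 < (A e.1).card := Finset.card_pos.mpr ⟨x, hx⟩
        rw [if_pos rfl, if_neg (fun h : e.2 = e.1 => hij h.symm)] at hc1
        omega
      · by_cases h2 : i = e.2
        · subst h2
          rw [hA'2, Finset.card_erase_of_mem hy]
          have hpos : 0 < (A e.2).card := Finset.card_pos.mpr ⟨y, hy⟩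
          rw [if_pos rfl, if_neg hij] at hc1
          omega
        · rw [hA'other i h1 h2]
          have n1 : ¬ (e.1 = i) := fun h => h1 h.symm
          have n2 : ¬ (e.2 = i) := fun h => h2 h.symm
          rw [if_neg n1, if_neg n2] at hc1
          omega
    have hfib' : ∀ i, ∀ z ∈ A' i, c z = i := by
      intro i z hz
      apply hfib i
      by_cases h1 : i = e.1
      · subst h1; rw [hA'1] at hz; exact Finset.mem_of_mem_erase hz
      · by_cases h2 : i = e.2
        · subst h2; rw [hA'2] at hz; exact Finset.mem_of_mem_erase hz
        · rwa [hA'other i h1 h2] at hz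
    have hloop' : ∀ f ∈ Ω, f.1 ≠ f.2 := fun f hf => hloop f (Multiset.mem_cons_of_mem hf)
    obtain ⟨Γ', hmap, hsum⟩ := ih A' hloop' hcard' hfib'
    refine ⟨(x, y) ::ₘ Γ', ?_, ?_⟩
    · rw [Multiset.map_cons, hmap]
      congr 1
      exact Prod.ext (hfib e.1 x hx) (hfib e.2 y hy)
    · have split : ∀ B : Fin k → Multiset (Fin n),
          ∑ i, B i = B e.1 + (B e.2 + ∑ i ∈ (Finset.univ.erase e.1).erase e.2, B i) := by
        intro B
        rw [Finset.add_sum_erase _ B (Finset.mem_erase.mpr ⟨fun h => hij h.symm, Finset.mem_univ e.2⟩),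
          Finset.add_sum_erase _ B (Finset.mem_univ e.1)]
      have hrest : ∀ i ∈ (Finset.univ.erase e.1).erase e.2, (A' i).val = (A i).val := by
        intro i hi
        rw [hA'other i (Finset.mem_erase.mp (Finset.mem_erase.mp hi).2).1 (Finset.mem_erase.mp hi).1]
      rw [Multiset.map_cons, Multiset.map_cons, Multiset.cons_add, Multiset.add_cons, hsum,
        split (fun i => (A' i).val), split (fun i => (A i).val), Finset.sum_congr rfl hrest,
        hA'1, hA'2, Finset.erase_val, Finset.erase_val]
      have hx' : x ∈ (A e.1).val := Finset.mem_def.mp hx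
      have hy' : y ∈ (A e.2).val := Finset.mem_def.mp hy
      obtain ⟨s1, hs1⟩ : ∃ s1, (A e.1).val = x ::ₘ s1 := ⟨_, (Multiset.cons_erase hx').symm⟩
      obtain ⟨s2, hs2⟩ : ∃ s2, (A e.2).val = y ::ₘ s2 := ⟨_, (Multiset.cons_erase hy').symm⟩
      rw [hs1, hs2, Multiset.erase_cons_head, Multiset.erase_cons_head]
      apply Multiset.ext.mpr
      intro a
      simp only [Multiset.count_cons, Multiset.count_add]
      split_ifs <;> omega
end Lift
section Lift2
open Sum
variable {k n : ℕ} {w : Fin k → ℕ} {c : Fin n → Fin k}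
variable (hn : n = ∑ i, w i)
  (hc : ∀ (j : Fin n) (i : Fin k), c j = i ↔
      (∑ i' ∈ Finset.univ.filter (fun i' => i' < i), w i') ≤ (j : ℕ) ∧
      (j : ℕ) < ∑ i' ∈ Finset.univ.filter (fun i' => i' ≤ i), w i')

include hn hc in
lemma exists_lift (Ω : GraphOfDeg w) :
    ∃ Γ : PM n, (∀ E ∈ Γ.val, c E.1 ≠ c E.2) ∧
      Γ.val.map (fun E => (c E.1, c E.2)) = Ω.val := by
  obtain ⟨Γ, hmap, hend⟩ := lift_aux Ω.val (fun i => clump c i) Ω.prop.1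
      (fun i => by
        rw [show (clump c i).card = w i from clump_card hn hc i, ← Ω.prop.2 i]
        rfl)
      (fun i x hx => mem_clump.mp hx)
  have hPM : Γ.isPM := by
    intro v
    have hcount : Multiset.count v (Γ.map Prod.fst + Γ.map Prod.snd) = 1 := by
      rw [hend]
      have : ∀ i : Fin k, Multiset.count v ((clump c i).val)
          = if c v = i then 1 else 0 := by
        intro i
        by_cases hvi : c v = i
        · rw [if_pos hvi]
          exact Multiset.count_eq_one_of_mem (clump c i).nodup
            (Finset.mem_def.mp (mem_clump.mpr hvi))
        · rw [if_neg hvi]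
          exact Multiset.count_eq_zero_of_notMem
            (fun hmem => hvi (mem_clump.mp hmem))
      rw [Multiset.count_sum', Finset.sum_congr rfl (fun i _ => this i),
        Finset.sum_ite_eq Finset.univ (c v) (fun _ => 1)]
      simp
    rw [DGraph.mdeg]
    rw [Multiset.count_add] at hcount
    have h1 : Multiset.count v (Γ.map Prod.fst)
        = Multiset.countP (fun E : Fin n × Fin n => E.1 = v) Γ := by
      rw [Multiset.count_map]
      rw [Multiset.countP_eq_card_filter]
      congr 1
      apply Multiset.filter_congr
      intro E _
      exact ⟨fun h => h.symm, fun h => h.symm⟩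
    have h2 : Multiset.count v (Γ.map Prod.snd)
        = Multiset.countP (fun E : Fin n × Fin n => E.2 = v) Γ := by
      rw [Multiset.count_map]
      rw [Multiset.countP_eq_card_filter]
      congr 1
      apply Multiset.filter_congr
      intro E _
      exact ⟨fun h => h.symm, fun h => h.symm⟩
    rw [h1, h2] at hcount
    exact hcount
  refine ⟨⟨Γ, hPM⟩, ?_, hmap⟩
  intro E hE
  have : (c E.1, c E.2) ∈ Ω.val := by
    rw [← hmap]
    exact Multiset.mem_map_of_mem _ hE
  exact Ω.prop.1 _ this
end Lift2
section Beta
open Sum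
variable {k n : ℕ} {w : Fin k → ℕ} {c : Fin n → Fin k}

lemma phiMap_single (Γ : PM n) : phiMap n (Finsupp.single Γ 1) = XG Γ.val := by
  simp [phiMap, Finsupp.lift_apply, Finsupp.sum_single_index]

lemma betaMap_single_good (Γ : PM n)
    (h : (∀ e ∈ Γ.val, c e.1 ≠ c e.2) ∧
        (DGraph.loopless (Γ.val.map (fun e => (c e.1, c e.2))) ∧
          ∀ v, DGraph.mdeg (Γ.val.map (fun e => (c e.1, c e.2))) v = w v)) :
    betaMap w c (Finsupp.single Γ 1)
      = Finsupp.single ⟨Γ.val.map (fun e => (c e.1, c e.2)), h.2⟩ 1 := by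
  rw [betaMap]
  rw [Finsupp.lift_apply, Finsupp.sum_single_index (by simp), one_smul, dif_pos h]

lemma betaMap_single_bad (Γ : PM n)
    (h : ¬ ((∀ e ∈ Γ.val, c e.1 ≠ c e.2) ∧
        (DGraph.loopless (Γ.val.map (fun e => (c e.1, c e.2))) ∧
          ∀ v, DGraph.mdeg (Γ.val.map (fun e => (c e.1, c e.2))) v = w v))) :
    betaMap w c (Finsupp.single Γ 1) = 0 := by
  rw [betaMap]
  rw [Finsupp.lift_apply, Finsupp.sum_single_index (by simp), one_smul, dif_neg h]

noncomputable def KerSub (w : Fin k → ℕ) (c : Fin n → Fin k) :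
    Submodule ℤ (GraphOfDeg w →₀ ℤ) :=
  (LinearMap.ker (phiMap n)).map (betaMap w c)

lemma rename_XG (Γ : DGraph n) :
    MvPolynomial.rename (Sum.map c c) (XG Γ)
      = XG (Γ.map (fun E => (c E.1, c E.2))) := by
  rw [XG_eq, XG_eq]
  rw [map_multiset_prod]
  rw [Multiset.map_map, Multiset.map_map]
  congr 1
  apply Multiset.map_congr rfl
  intro E _
  simp [edgeF, Function.comp]

variable (hn : n = ∑ i, w i)
  (hc : ∀ (j : Fin n) (i : Fin k), c j = i ↔
      (∑ i' ∈ Finset.univ.filter (fun i' => i' < i), w i') ≤ (j : ℕ) ∧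
      (j : ℕ) < ∑ i' ∈ Finset.univ.filter (fun i' => i' ≤ i), w i')

include hn hc in
lemma psi_beta_single (Γ : PM n) :
    psiMap w (betaMap w c (Finsupp.single Γ 1))
      = MvPolynomial.rename (Sum.map c c) (phiMap n (Finsupp.single Γ 1)) := by
  rw [phiMap_single, rename_XG]
  by_cases hgood : ∀ e ∈ Γ.val, c e.1 ≠ c e.2
  · have hll : DGraph.loopless (Γ.val.map (fun e => (c e.1, c e.2))) := by
      intro f hf
      obtain ⟨E, hE, rfl⟩ := Multiset.mem_map.mp hf
      exact hgood E hE
    have hmd : ∀ v, DGraph.mdeg (Γ.val.map (fun e => (c e.1, c e.2))) v = w v :=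
      fun v => mdeg_contract hn hc Γ.val Γ.prop v
    rw [betaMap_single_good Γ ⟨hgood, hll, hmd⟩]
    rw [psiMap]
    rw [Finsupp.lift_apply, Finsupp.sum_single_index (by simp), one_smul]
  · rw [betaMap_single_bad Γ
      (fun hcon => hgood hcon.1), map_zero]
    push_neg at hgood
    obtain ⟨E, hE, hloop⟩ := hgood
    symm
    rw [XG_eq]
    apply Multiset.prod_eq_zero
    have : (c E.1, c E.2) ∈ Γ.val.map (fun e => (c e.1, c e.2)) :=
      Multiset.mem_map_of_mem _ hE
    have hz : edgeF (c E.1, c E.2) = 0 := by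
      rw [edgeF]
      rw [hloop]
      ring
    rw [← hz]
    exact Multiset.mem_map_of_mem _ this

include hn hc in
lemma ker_psi_of_mem_KerSub (y : GraphOfDeg w →₀ ℤ) (hy : y ∈ KerSub w c) :
    psiMap w y = 0 := by
  obtain ⟨x, hx, rfl⟩ := hy
  have hcomm : (psiMap w).comp (betaMap w c)
      = (MvPolynomial.rename (R := ℤ) (Sum.map c c)).toLinearMap.comp (phiMap n) := by
    apply Finsupp.lhom_ext
    intro Γ b
    have h1 : (Finsupp.single Γ b) = b • (Finsupp.single Γ (1:ℤ)) := by
      rw [Finsupp.smul_single, smul_eq_mul, mul_one]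
    rw [LinearMap.comp_apply, LinearMap.comp_apply, h1, map_smul, map_smul, map_smul,
      map_smul, AlgHom.toLinearMap_apply, psi_beta_single hn hc Γ]
  have hx' := LinearMap.congr_fun hcomm x
  rw [LinearMap.comp_apply, LinearMap.comp_apply, AlgHom.toLinearMap_apply] at hx'
  rw [hx', LinearMap.mem_ker.mp hx, map_zero]
end Beta
section Rel
open Sum
variable {k n : ℕ} {w : Fin k → ℕ} {c : Fin n → Fin k}

lemma map_eq_cons_extract {α β : Type*} {f : α → β} {s : Multiset α} {a : β} {t : Multiset β}
    (h : s.map f = a ::ₘ t) : ∃ b s', s = b ::ₘ s' ∧ f b = a ∧ s'.map f = t := by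
  have ha : a ∈ s.map f := by rw [h]; exact Multiset.mem_cons_self a t
  obtain ⟨b, hb, hfb⟩ := Multiset.mem_map.mp ha
  refine ⟨b, s.erase b, (Multiset.cons_erase hb).symm, hfb, ?_⟩
  have hmap : s.map f = f b ::ₘ (s.erase b).map f := by
    conv_lhs => rw [← Multiset.cons_erase hb]
    rw [Multiset.map_cons]
  rw [hmap, hfb] at h
  exact (Multiset.cons_inj_right a).mp h

lemma edgeF_swap {N : ℕ} (p q : Fin N) : edgeF (q, p) = - edgeF (p, q) := by
  simp only [edgeF]
  ring

lemma edgeF_pluck {N : ℕ} (a b c' d : Fin N) :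
    edgeF (a, b) * edgeF (c', d)
      = edgeF (c', b) * edgeF (a, d) + edgeF (a, c') * edgeF (b, d) := by
  simp only [edgeF]
  ring

variable (hn : n = ∑ i, w i)
  (hc : ∀ (j : Fin n) (i : Fin k), c j = i ↔
      (∑ i' ∈ Finset.univ.filter (fun i' => i' < i), w i') ≤ (j : ℕ) ∧
      (j : ℕ) < ∑ i' ∈ Finset.univ.filter (fun i' => i' ≤ i), w i')

include hn hc in
lemma rel_rev (Ω Ω' : GraphOfDeg w) (e : Fin k × Fin k) (t : DGraph k)
    (hΩ : Ω.val = e ::ₘ t) (hΩ' : Ω'.val = (e.2, e.1) ::ₘ t) :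
    Finsupp.single Ω 1 + Finsupp.single Ω' 1 ∈ KerSub w c := by
  obtain ⟨Γ, hgood, hmapΓ⟩ := exists_lift hn hc Ω
  have hmap := hmapΓ
  rw [hΩ] at hmap
  obtain ⟨E, Γ₀, hΓ, hE, hmap₀⟩ := map_eq_cons_extract hmap
  have hE1 : c E.1 = e.1 := congrArg Prod.fst hE
  have hE2 : c E.2 = e.2 := congrArg Prod.snd hE
  have hPM' : DGraph.isPM ((E.2, E.1) ::ₘ Γ₀) := by
    have h0 := Γ.prop
    rw [hΓ] at h0
    intro v
    have hv := h0 v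
    simp only [DGraph.mdeg, Multiset.countP_cons] at hv ⊢
    omega
  set Γ' : PM n := ⟨(E.2, E.1) ::ₘ Γ₀, hPM'⟩ with hΓ'
  have hEmem : E ∈ Γ.val := by rw [hΓ]; exact Multiset.mem_cons_self E Γ₀
  have hmapΓ' : Γ'.val.map (fun E => (c E.1, c E.2)) = Ω'.val := by
    rw [hΓ', hΩ', Multiset.map_cons, hmap₀]
    congr 1
    exact Prod.ext hE2 hE1
  have hgood' : ∀ F ∈ Γ'.val, c F.1 ≠ c F.2 := by
    intro F hF
    rcases Multiset.mem_cons.mp hF with h | h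
    · subst h
      exact fun hcc => (hgood E hEmem) hcc.symm
    · exact hgood F (by rw [hΓ]; exact Multiset.mem_cons_of_mem h)
  refine ⟨Finsupp.single Γ 1 + Finsupp.single Γ' 1, ?_, ?_⟩
  · simp only [SetLike.mem_coe, LinearMap.mem_ker]
    rw [map_add, phiMap_single, phiMap_single]
    show XG Γ.val + XG ((E.2, E.1) ::ₘ Γ₀) = 0
    rw [hΓ, XG_cons, XG_cons, edgeF_swap]
    ring
  · rw [map_add]
    have hcoΓ : (∀ f ∈ Γ.val, c f.1 ≠ c f.2) ∧
        (DGraph.loopless (Γ.val.map (fun f => (c f.1, c f.2))) ∧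
          ∀ v, DGraph.mdeg (Γ.val.map (fun f => (c f.1, c f.2))) v = w v) := by
      refine ⟨hgood, ?_⟩
      rw [hmapΓ]
      exact Ω.prop
    have hcoΓ' : (∀ f ∈ Γ'.val, c f.1 ≠ c f.2) ∧
        (DGraph.loopless (Γ'.val.map (fun f => (c f.1, c f.2))) ∧
          ∀ v, DGraph.mdeg (Γ'.val.map (fun f => (c f.1, c f.2))) v = w v) := by
      refine ⟨hgood', ?_⟩
      rw [hmapΓ']
      exact Ω'.prop
    rw [betaMap_single_good Γ hcoΓ, betaMap_single_good Γ' hcoΓ']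
    rw [show (⟨Γ.val.map (fun g => (c g.1, c g.2)), hcoΓ.2⟩ : GraphOfDeg w) = Ω from
        Subtype.ext hmapΓ,
      show (⟨Γ'.val.map (fun g => (c g.1, c g.2)), hcoΓ'.2⟩ : GraphOfDeg w) = Ω' from
        Subtype.ext hmapΓ']

include hn hc in
lemma rel_pluck (Ω Ω' Ω'' : GraphOfDeg w) (e f : Fin k × Fin k) (t : DGraph k)
    (hΩ : Ω.val = e ::ₘ f ::ₘ t)
    (hΩ' : Ω'.val = (f.1, e.2) ::ₘ (e.1, f.2) ::ₘ t)
    (hΩ'' : Ω''.val = (e.1, f.1) ::ₘ (e.2, f.2) ::ₘ t) :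
    Finsupp.single Ω 1 - Finsupp.single Ω' 1 - Finsupp.single Ω'' 1 ∈ KerSub w c := by
  obtain ⟨Γ, hgood, hmapΓ⟩ := exists_lift hn hc Ω
  have hmap := hmapΓ
  rw [hΩ] at hmap
  obtain ⟨E, Γ₁, hΓ, hE, hmap₁⟩ := map_eq_cons_extract hmap
  obtain ⟨F, Γ₀, hΓ₁, hF, hmap₀⟩ := map_eq_cons_extract hmap₁
  have hE1 : c E.1 = e.1 := congrArg Prod.fst hE
  have hE2 : c E.2 = e.2 := congrArg Prod.snd hE
  have hF1 : c F.1 = f.1 := congrArg Prod.fst hF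
  have hF2 : c F.2 = f.2 := congrArg Prod.snd hF
  have hΓfull : Γ.val = E ::ₘ F ::ₘ Γ₀ := by rw [hΓ, hΓ₁]
  have h0 := Γ.prop
  rw [hΓfull] at h0
  have hPM' : DGraph.isPM ((F.1, E.2) ::ₘ (E.1, F.2) ::ₘ Γ₀) := by
    intro v
    have hv := h0 v
    simp only [DGraph.mdeg, Multiset.countP_cons] at hv ⊢
    omega
  have hPM'' : DGraph.isPM ((E.1, F.1) ::ₘ (E.2, F.2) ::ₘ Γ₀) := by
    intro v
    have hv := h0 v
    simp only [DGraph.mdeg, Multiset.countP_cons] at hv ⊢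
    omega
  set Γ' : PM n := ⟨(F.1, E.2) ::ₘ (E.1, F.2) ::ₘ Γ₀, hPM'⟩ with hΓ'
  set Γ'' : PM n := ⟨(E.1, F.1) ::ₘ (E.2, F.2) ::ₘ Γ₀, hPM''⟩ with hΓ''
  have hmapΓ' : Γ'.val.map (fun E => (c E.1, c E.2)) = Ω'.val := by
    rw [hΓ', hΩ', Multiset.map_cons, Multiset.map_cons, hmap₀]
    congr 1
    · exact Prod.ext hF1 hE2
    · congr 1
      exact Prod.ext hE1 hF2
  have hmapΓ'' : Γ''.val.map (fun E => (c E.1, c E.2)) = Ω''.val := by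
    rw [hΓ'', hΩ'', Multiset.map_cons, Multiset.map_cons, hmap₀]
    congr 1
    · exact Prod.ext hE1 hF1
    · congr 1
      exact Prod.ext hE2 hF2
  have hmemΓ₀ : ∀ G ∈ Γ₀, G ∈ Γ.val := by
    intro G hG
    rw [hΓfull]
    exact Multiset.mem_cons_of_mem (Multiset.mem_cons_of_mem hG)
  have hgood' : ∀ G ∈ Γ'.val, c G.1 ≠ c G.2 := by
    intro G hG
    have hO' := Ω'.prop.1
    rcases Multiset.mem_cons.mp hG with h | h
    · subst h
      intro hcc
      exact hO' (f.1, e.2) (by rw [hΩ']; exact Multiset.mem_cons_self _ _)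
        (by simpa [hF1, hE2] using hcc)
    · rcases Multiset.mem_cons.mp h with h' | h'
      · subst h'
        intro hcc
        exact hO' (e.1, f.2) (by rw [hΩ']; exact Multiset.mem_cons_of_mem (Multiset.mem_cons_self _ _))
          (by simpa [hE1, hF2] using hcc)
      · exact hgood G (hmemΓ₀ G h')
  have hgood'' : ∀ G ∈ Γ''.val, c G.1 ≠ c G.2 := by
    intro G hG
    have hO'' := Ω''.prop.1
    rcases Multiset.mem_cons.mp hG with h | h
    · subst h
      intro hcc
      exact hO'' (e.1, f.1) (by rw [hΩ'']; exact Multiset.mem_cons_self _ _)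
        (by simpa [hE1, hF1] using hcc)
    · rcases Multiset.mem_cons.mp h with h' | h'
      · subst h'
        intro hcc
        exact hO'' (e.2, f.2) (by rw [hΩ'']; exact Multiset.mem_cons_of_mem (Multiset.mem_cons_self _ _))
          (by simpa [hE2, hF2] using hcc)
      · exact hgood G (hmemΓ₀ G h')
  refine ⟨Finsupp.single Γ 1 - Finsupp.single Γ' 1 - Finsupp.single Γ'' 1, ?_, ?_⟩
  · simp only [SetLike.mem_coe, LinearMap.mem_ker]
    rw [map_sub, map_sub, phiMap_single, phiMap_single, phiMap_single]
    show XG Γ.val - XG ((F.1, E.2) ::ₘ (E.1, F.2) ::ₘ Γ₀)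
        - XG ((E.1, F.1) ::ₘ (E.2, F.2) ::ₘ Γ₀) = 0
    rw [hΓfull, XG_cons, XG_cons, XG_cons, XG_cons, XG_cons, XG_cons]
    have hid := edgeF_pluck E.1 E.2 F.1 F.2
    have hEe : (E.1, E.2) = E := rfl
    have hFe : (F.1, F.2) = F := rfl
    rw [hEe, hFe] at hid
    rw [← mul_assoc, ← mul_assoc, ← mul_assoc, hid]
    ring
  · rw [map_sub, map_sub]
    have hcoΓ : (∀ g ∈ Γ.val, c g.1 ≠ c g.2) ∧
        (DGraph.loopless (Γ.val.map (fun g => (c g.1, c g.2))) ∧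
          ∀ v, DGraph.mdeg (Γ.val.map (fun g => (c g.1, c g.2))) v = w v) := by
      refine ⟨hgood, ?_⟩
      rw [hmapΓ]
      exact Ω.prop
    have hcoΓ' : (∀ g ∈ Γ'.val, c g.1 ≠ c g.2) ∧
        (DGraph.loopless (Γ'.val.map (fun g => (c g.1, c g.2))) ∧
          ∀ v, DGraph.mdeg (Γ'.val.map (fun g => (c g.1, c g.2))) v = w v) := by
      refine ⟨hgood', ?_⟩
      rw [hmapΓ']
      exact Ω'.prop
    have hcoΓ'' : (∀ g ∈ Γ''.val, c g.1 ≠ c g.2) ∧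
        (DGraph.loopless (Γ''.val.map (fun g => (c g.1, c g.2))) ∧
          ∀ v, DGraph.mdeg (Γ''.val.map (fun g => (c g.1, c g.2))) v = w v) := by
      refine ⟨hgood'', ?_⟩
      rw [hmapΓ'']
      exact Ω''.prop
    rw [betaMap_single_good Γ hcoΓ, betaMap_single_good Γ' hcoΓ', betaMap_single_good Γ'' hcoΓ'']
    rw [show (⟨Γ.val.map (fun g => (c g.1, c g.2)), hcoΓ.2⟩ : GraphOfDeg w) = Ω from
        Subtype.ext hmapΓ,
      show (⟨Γ'.val.map (fun g => (c g.1, c g.2)), hcoΓ'.2⟩ : GraphOfDeg w) = Ω' from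
        Subtype.ext hmapΓ',
      show (⟨Γ''.val.map (fun g => (c g.1, c g.2)), hcoΓ''.2⟩ : GraphOfDeg w) = Ω'' from
        Subtype.ext hmapΓ'']
end Rel
section Rewrite
open Sum
variable {k n : ℕ} {w : Fin k → ℕ} {c : Fin n → Fin k}

def diffN {N : ℕ} (e : Fin N × Fin N) : ℕ :=
  ((e.2 : ℕ) - (e.1 : ℕ)) + ((e.1 : ℕ) - (e.2 : ℕ))

def muM (s : DGraph k) : ℕ := (s.map (fun e => diffN e * diffN e)).sum

def decM (s : DGraph k) : ℕ := Multiset.countP (fun e : Fin k × Fin k => e.2 < e.1) s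

def measureM (n : ℕ) (s : DGraph k) : ℕ := (n + 1) * muM s + decM s

lemma muM_cons (e : Fin k × Fin k) (s : DGraph k) :
    muM (e ::ₘ s) = diffN e * diffN e + muM s := by simp [muM]

lemma decM_cons (e : Fin k × Fin k) (s : DGraph k) :
    decM (e ::ₘ s) = decM s + if e.2 < e.1 then 1 else 0 := by
  simp [decM, Multiset.countP_cons]

lemma sum_countP_fst (s : DGraph k) :
    ∑ v, Multiset.countP (fun e => e.1 = v) s = Multiset.card s := by
  induction s using Multiset.induction with
  | empty => simp
  | cons e s ih =>
    simp only [Multiset.countP_cons, Multiset.card_cons, Finset.sum_add_distrib, ih]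
    rw [Finset.sum_ite_eq Finset.univ e.1 (fun _ => 1)]
    simp

lemma sum_countP_snd (s : DGraph k) :
    ∑ v, Multiset.countP (fun e => e.2 = v) s = Multiset.card s := by
  induction s using Multiset.induction with
  | empty => simp
  | cons e s ih =>
    simp only [Multiset.countP_cons, Multiset.card_cons, Finset.sum_add_distrib, ih]
    rw [Finset.sum_ite_eq Finset.univ e.2 (fun _ => 1)]
    simp

lemma sq_ineq (a b c d : ℕ) (h1 : a < b) (h2 : b < c) (h3 : c < d) :
    ((d - b) * (d - b) + (c - a) * (c - a) < (d - a) * (d - a) + (c - b) * (c - b)) ∧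
    ((b - a) * (b - a) + (d - c) * (d - c) < (d - a) * (d - a) + (c - b) * (c - b)) := by
  obtain ⟨x, hx1, hx⟩ : ∃ x, 1 ≤ x ∧ b - a = x := ⟨b - a, by omega, rfl⟩
  obtain ⟨y, hy1, hy⟩ : ∃ y, 1 ≤ y ∧ c - b = y := ⟨c - b, by omega, rfl⟩
  obtain ⟨z, hz1, hz⟩ : ∃ z, 1 ≤ z ∧ d - c = z := ⟨d - c, by omega, rfl⟩
  have e1 : d - b = y + z := by omega
  have e2 : c - a = x + y := by omega
  have e3 : d - a = x + y + z := by omega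
  rw [e1, e2, e3, hx, hy, hz]
  constructor
  · nlinarith
  · nlinarith

variable (hn : n = ∑ i, w i)
  (hc : ∀ (j : Fin n) (i : Fin k), c j = i ↔
      (∑ i' ∈ Finset.univ.filter (fun i' => i' < i), w i') ≤ (j : ℕ) ∧
      (j : ℕ) < ∑ i' ∈ Finset.univ.filter (fun i' => i' ≤ i), w i')

include hn in
lemma decM_le (Ω : GraphOfDeg w) : decM Ω.val ≤ n := by
  have hsum : ∑ v, DGraph.mdeg Ω.val v = 2 * Multiset.card Ω.val := by
    simp only [DGraph.mdeg, Finset.sum_add_distrib, sum_countP_fst, sum_countP_snd]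
    omega
  have hw : ∑ v, DGraph.mdeg Ω.val v = ∑ i, w i :=
    Finset.sum_congr rfl (fun v _ => Ω.prop.2 v)
  have hcard : 2 * Multiset.card Ω.val = n := by rw [← hsum, hw, hn]
  calc decM Ω.val ≤ Multiset.card Ω.val := Multiset.countP_le_card _ _
    _ ≤ n := by omega

include hn hc in
lemma rewrite_std : ∀ (N : ℕ) (Ω : GraphOfDeg w), measureM n Ω.val < N →
    ∃ z ∈ Finsupp.supported ℤ ℤ {Ω' : GraphOfDeg w | Std Ω'.val},
      Finsupp.single Ω 1 - z ∈ KerSub w c := by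
  intro N
  induction N with
  | zero => intro Ω h; exact absurd h (Nat.not_lt_zero _)
  | succ N ih =>
    intro Ω hm
    by_cases hdec : ∃ e ∈ Ω.val, e.2 < e.1
    · obtain ⟨e, he, hlt⟩ := hdec
      set t := Ω.val.erase e with ht
      have hcons : Ω.val = e ::ₘ t := (Multiset.cons_erase he).symm
      have hloop' : DGraph.loopless ((e.2, e.1) ::ₘ t) := by
        intro g hg
        rcases Multiset.mem_cons.mp hg with h | h
        · subst h
          exact fun hq => (Ω.prop.1 e he) hq.symm
        · exact Ω.prop.1 g (Multiset.mem_of_mem_erase h)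
      have hmdeg' : ∀ v, DGraph.mdeg ((e.2, e.1) ::ₘ t) v = w v := by
        intro v
        have hv := Ω.prop.2 v
        rw [hcons] at hv
        simp only [DGraph.mdeg, Multiset.countP_cons] at hv ⊢
        omega
      set Ω' : GraphOfDeg w := ⟨(e.2, e.1) ::ₘ t, hloop', hmdeg'⟩ with hΩ'
      have hdiffswap : diffN (e.2, e.1) = diffN e := by
        simp only [diffN]
        omega
      have hmeasΩ : measureM n Ω.val
          = (n + 1) * (diffN e * diffN e + muM t) + (decM t + 1) := by
        rw [hcons, measureM, muM_cons, decM_cons, if_pos hlt]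
      have hmeasΩ' : measureM n Ω'.val
          = (n + 1) * (diffN e * diffN e + muM t) + decM t := by
        show measureM n ((e.2, e.1) ::ₘ t) = _
        rw [measureM, muM_cons, decM_cons, hdiffswap]
        have : ¬ ((e.2, e.1).2 < (e.2, e.1).1) := by
          show ¬ (e.1 < e.2)
          exact lt_asymm hlt
        rw [if_neg this, add_zero]
      have hmeas' : measureM n Ω'.val < N := by omega
      obtain ⟨z', hz'supp, hz'⟩ := ih Ω' hmeas'
      refine ⟨-z', neg_mem hz'supp, ?_⟩
      have hre : Finsupp.single Ω 1 - (-z')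
          = (Finsupp.single Ω 1 + Finsupp.single Ω' 1) - (Finsupp.single Ω' 1 - z') := by
        abel
      rw [hre]
      exact sub_mem (rel_rev hn hc Ω Ω' e t hcons rfl) hz'
    · push_neg at hdec
      have hinc : ∀ g ∈ Ω.val, g.1 < g.2 := by
        intro g hg
        exact lt_of_le_of_ne (hdec g hg) (Ω.prop.1 g hg)
      by_cases hnest : ∃ e ∈ Ω.val, ∃ f ∈ Ω.val, e.1 < f.1 ∧ f.2 < e.2
      · obtain ⟨e, he, f, hf, h1, h2⟩ := hnest
        have hne : e ≠ f := by
          intro h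
          subst h
          exact lt_irrefl _ h1
        have hfe : f ∈ Ω.val.erase e := (Multiset.mem_erase_of_ne hne.symm).mpr hf
        set t := (Ω.val.erase e).erase f with ht
        have hcons : Ω.val = e ::ₘ f ::ₘ t := by
          rw [ht, Multiset.cons_erase hfe, Multiset.cons_erase he]
        have htmem : ∀ g ∈ t, g ∈ Ω.val := by
          intro g hg
          exact Multiset.mem_of_mem_erase (Multiset.mem_of_mem_erase hg)
        -- the strict chain
        have hch1 : e.1 < f.1 := h1
        have hch2 : f.1 < f.2 := hinc f hf
        have hch3 : f.2 < e.2 := h2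
        have hloopt : ∀ g ∈ t, g.1 ≠ g.2 := fun g hg => Ω.prop.1 g (htmem g hg)
        have hmdegt : ∀ v, DGraph.mdeg (e ::ₘ f ::ₘ t) v = w v := by
          intro v
          rw [← hcons]
          exact Ω.prop.2 v
        have hloop' : DGraph.loopless ((f.1, e.2) ::ₘ (e.1, f.2) ::ₘ t) := by
          intro g hg
          rcases Multiset.mem_cons.mp hg with h | h
          · subst h; exact ne_of_lt (lt_trans hch2 hch3)
          · rcases Multiset.mem_cons.mp h with h' | h'
            · subst h'; exact ne_of_lt (lt_trans hch1 hch2)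
            · exact hloopt g h'
        have hloop'' : DGraph.loopless ((e.1, f.1) ::ₘ (e.2, f.2) ::ₘ t) := by
          intro g hg
          rcases Multiset.mem_cons.mp hg with h | h
          · subst h; exact ne_of_lt hch1
          · rcases Multiset.mem_cons.mp h with h' | h'
            · subst h'; exact (ne_of_lt hch3).symm
            · exact hloopt g h'
        have hmdeg' : ∀ v, DGraph.mdeg ((f.1, e.2) ::ₘ (e.1, f.2) ::ₘ t) v = w v := by
          intro v
          have hv := hmdegt v
          simp only [DGraph.mdeg, Multiset.countP_cons] at hv ⊢
          omega
        have hmdeg'' : ∀ v, DGraph.mdeg ((e.1, f.1) ::ₘ (e.2, f.2) ::ₘ t) v = w v := by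
          intro v
          have hv := hmdegt v
          simp only [DGraph.mdeg, Multiset.countP_cons] at hv ⊢
          omega
        set Ω' : GraphOfDeg w := ⟨(f.1, e.2) ::ₘ (e.1, f.2) ::ₘ t, hloop', hmdeg'⟩ with hΩ'
        set Ω'' : GraphOfDeg w := ⟨(e.1, f.1) ::ₘ (e.2, f.2) ::ₘ t, hloop'', hmdeg''⟩ with hΩ''
        -- measures
        have ha : (e.1 : ℕ) < (f.1 : ℕ) := hch1
        have hb : (f.1 : ℕ) < (f.2 : ℕ) := hch2
        have hcc : (f.2 : ℕ) < (e.2 : ℕ) := hch3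
        obtain ⟨key1, key2⟩ := sq_ineq (e.1 : ℕ) (f.1 : ℕ) (f.2 : ℕ) (e.2 : ℕ) ha hb hcc
        have hde : diffN e = (e.2 : ℕ) - (e.1 : ℕ) := by simp only [diffN]; omega
        have hdf : diffN f = (f.2 : ℕ) - (f.1 : ℕ) := by simp only [diffN]; omega
        have hd1 : diffN (f.1, e.2) = (e.2 : ℕ) - (f.1 : ℕ) := by simp only [diffN]; omega
        have hd2 : diffN (e.1, f.2) = (f.2 : ℕ) - (e.1 : ℕ) := by simp only [diffN]; omega
        have hd3 : diffN (e.1, f.1) = (f.1 : ℕ) - (e.1 : ℕ) := by simp only [diffN]; omega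
        have hd4 : diffN (e.2, f.2) = (e.2 : ℕ) - (f.2 : ℕ) := by simp only [diffN]; omega
        have hmu : muM Ω.val = diffN e * diffN e + (diffN f * diffN f + muM t) := by
          rw [hcons, muM_cons, muM_cons]
        have hmu' : muM Ω'.val
            = diffN (f.1, e.2) * diffN (f.1, e.2) + (diffN (e.1, f.2) * diffN (e.1, f.2) + muM t) := by
          show muM ((f.1, e.2) ::ₘ (e.1, f.2) ::ₘ t) = _
          rw [muM_cons, muM_cons]
        have hmu'' : muM Ω''.val
            = diffN (e.1, f.1) * diffN (e.1, f.1) + (diffN (e.2, f.2) * diffN (e.2, f.2) + muM t) := by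
          show muM ((e.1, f.1) ::ₘ (e.2, f.2) ::ₘ t) = _
          rw [muM_cons, muM_cons]
        have hmult' : muM Ω'.val < muM Ω.val := by
          rw [hmu, hmu', hde, hdf, hd1, hd2]
          omega
        have hmult'' : muM Ω''.val < muM Ω.val := by
          rw [hmu, hmu'', hde, hdf, hd3, hd4]
          omega
        have hd'le := decM_le hn Ω'
        have hd''le := decM_le hn Ω''
        have hmeasunfold : measureM n Ω.val = (n+1) * muM Ω.val + decM Ω.val := rfl
        have hmeas' : measureM n Ω'.val < N := by
          have : measureM n Ω'.val = (n+1) * muM Ω'.val + decM Ω'.val := rfl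
          have hmul : (n+1) * muM Ω'.val + (n+1) ≤ (n+1) * muM Ω.val := by
            have : muM Ω'.val + 1 ≤ muM Ω.val := hmult'
            calc (n+1) * muM Ω'.val + (n+1) = (n+1) * (muM Ω'.val + 1) := by ring
              _ ≤ (n+1) * muM Ω.val := Nat.mul_le_mul_left _ this
          omega
        have hmeas'' : measureM n Ω''.val < N := by
          have : measureM n Ω''.val = (n+1) * muM Ω''.val + decM Ω''.val := rfl
          have hmul : (n+1) * muM Ω''.val + (n+1) ≤ (n+1) * muM Ω.val := by
            have : muM Ω''.val + 1 ≤ muM Ω.val := hmult''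
            calc (n+1) * muM Ω''.val + (n+1) = (n+1) * (muM Ω''.val + 1) := by ring
              _ ≤ (n+1) * muM Ω.val := Nat.mul_le_mul_left _ this
          omega
        obtain ⟨z', hz'supp, hz'⟩ := ih Ω' hmeas'
        obtain ⟨z'', hz''supp, hz''⟩ := ih Ω'' hmeas''
        refine ⟨z' + z'', add_mem hz'supp hz''supp, ?_⟩
        have hre : Finsupp.single Ω 1 - (z' + z'')
            = (Finsupp.single Ω 1 - Finsupp.single Ω' 1 - Finsupp.single Ω'' 1)
              + (Finsupp.single Ω' 1 - z') + (Finsupp.single Ω'' 1 - z'') := by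
          abel
        rw [hre]
        exact add_mem (add_mem (rel_pluck hn hc Ω Ω' Ω'' e f t hcons rfl rfl) hz') hz''
      · push_neg at hnest
        refine ⟨Finsupp.single Ω 1, ?_, by simp⟩
        apply Finsupp.single_mem_supported
        exact ⟨hinc, fun e he f hf hco => absurd hco.2 (not_lt.mpr (hnest e he f hf hco.1))⟩
end Rewrite

/-- **Reduction of relations to the equilateral case.** `β` maps `ker φ` onto `ker ψ`:
every `ℤ`-linear relation among the invariants `X_Ω` (`Ω` of multidegree `w` on
`{1,…,k}`) is the image under the clump-contraction map `β` of a `ℤ`-linear relation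
among the invariants `X_Γ` (`Γ` a perfect matching on `{1,…,n}`, `n = w_1 + ⋯ + w_k`). -/
theorem beta_surjects_on_kernels (k : ℕ) (w : Fin k → ℕ) (hw : ∀ i, 1 ≤ w i)
    (n : ℕ) (hn : n = ∑ i, w i) (hneven : Even n)
    (c : Fin n → Fin k)
    (hc : ∀ (j : Fin n) (i : Fin k), c j = i ↔
      (∑ i' ∈ Finset.univ.filter (fun i' => i' < i), w i') ≤ (j : ℕ) ∧
      (j : ℕ) < ∑ i' ∈ Finset.univ.filter (fun i' => i' ≤ i), w i')
    (y : GraphOfDeg w →₀ ℤ) (hy : psiMap w y = 0) :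
    ∃ x : PM n →₀ ℤ, phiMap n x = 0 ∧ betaMap w c x = y := by
  classical
  have hrw : ∀ Ω : GraphOfDeg w,
      ∃ z ∈ Finsupp.supported ℤ ℤ {Ω' : GraphOfDeg w | Std Ω'.val},
        Finsupp.single Ω 1 - z ∈ KerSub w c :=
    fun Ω => rewrite_std hn hc (measureM n Ω.val + 1) Ω (Nat.lt_succ_self _)
  choose zf hzsupp hzker using hrw
  set Z : GraphOfDeg w →₀ ℤ := ∑ Ω ∈ y.support, y Ω • zf Ω with hZdef
  have hy' : y = ∑ Ω ∈ y.support, y Ω • Finsupp.single Ω (1 : ℤ) := by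
    ext Ω₀
    rw [Finsupp.finset_sum_apply, Finset.sum_eq_single Ω₀]
    · simp
    · intro Ω _ hne
      simp [Finsupp.smul_apply, Finsupp.single_apply, hne]
    · intro h
      simp [Finsupp.notMem_support_iff.mp h]
  have hrepr : y - Z = ∑ Ω ∈ y.support, y Ω • (Finsupp.single Ω (1 : ℤ) - zf Ω) := by
    have hsplit : ∑ Ω ∈ y.support, y Ω • (Finsupp.single Ω (1 : ℤ) - zf Ω)
        = (∑ Ω ∈ y.support, y Ω • Finsupp.single Ω (1 : ℤ))
          - ∑ Ω ∈ y.support, y Ω • zf Ω := by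
      rw [← Finset.sum_sub_distrib]
      apply Finset.sum_congr rfl
      intro Ω _
      rw [smul_sub]
    rw [hsplit, ← hy', hZdef]
  have hyZ : y - Z ∈ KerSub w c := by
    rw [hrepr]
    exact sum_mem (fun Ω _ => Submodule.smul_mem _ _ (hzker Ω))
  have hZsupp : Z ∈ Finsupp.supported ℤ ℤ {Ω' : GraphOfDeg w | Std Ω'.val} := by
    rw [hZdef]
    apply sum_mem
    intro Ω _
    exact Submodule.smul_mem _ _ (hzsupp Ω)
  have hpsiZ : psiMap w Z = 0 := by
    have h1 : psiMap w (y - Z) = 0 := ker_psi_of_mem_KerSub hn hc _ hyZ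
    rw [map_sub, hy, zero_sub, neg_eq_zero] at h1
    exact h1
  have hZ0 : Z = 0 :=
    psi_indep Z (fun Ω hΩ => (Finsupp.mem_supported ℤ Z).mp hZsupp hΩ) hpsiZ
  have hymem : y ∈ KerSub w c := by
    have h2 := hyZ
    rw [hZ0, sub_zero] at h2
    exact h2
  obtain ⟨x, hx, hbx⟩ := hymem
  exact ⟨x, LinearMap.mem_ker.mp hx, hbx⟩
end

section
/- (Kempe's theorem, equilateral case.) Let n = 2m be even and d ≥ 1. Then for every directed graph Γ on {1,…,n} of multidegree (d,d,…,d), the polynomial X_Γ lies in the additive subgroup of ℤ[u_1,…,u_n,v_1,…,v_n] generated by the products X_{Δ_1}·X_{Δ_2}⋯X_{Δ_d}, where Δ_1,…,Δ_d range over perfect matchings on {1,…,n}. -/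
open MvPolynomial

namespace Kempe
variable {n : ℕ}

noncomputable def g (a b : Fin n) : MvPolynomial (Fin n ⊕ Fin n) ℤ :=
  X (Sum.inl b) * X (Sum.inr a) - X (Sum.inl a) * X (Sum.inr b)

lemma XG_cons (e : Fin n × Fin n) (Γ : DGraph n) : XG (e ::ₘ Γ) = g e.1 e.2 * XG Γ := by
  simp [XG, g]

lemma XG_add (Γ₁ Γ₂ : DGraph n) : XG (Γ₁ + Γ₂) = XG Γ₁ * XG Γ₂ := by
  simp [XG, Multiset.prod_add]

lemma XG_zero : XG (0 : DGraph n) = 1 := by simp [XG]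

lemma plucker (a b c d : Fin n) :
    g a b * g c d = g a c * g b d - g a d * g b c := by
  simp only [g]; ring

lemma mdeg_cons (e : Fin n × Fin n) (Γ : DGraph n) (v : Fin n) :
    DGraph.mdeg (e ::ₘ Γ) v =
      ((if e.1 = v then 1 else 0) + (if e.2 = v then 1 else 0)) + Γ.mdeg v := by
  simp [DGraph.mdeg, Multiset.countP_cons]; ring

lemma sum_countP_fst (s : Finset (Fin n)) (Γ : DGraph n) :
    ∑ v ∈ s, Multiset.countP (fun e => e.1 = v) Γ
      = Multiset.countP (fun e => e.1 ∈ s) Γ := by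
  induction Γ using Multiset.induction with
  | empty => simp
  | cons e Γ ih =>
    simp [Multiset.countP_cons, Finset.sum_add_distrib, ih, Finset.sum_ite_eq]

lemma sum_countP_snd (s : Finset (Fin n)) (Γ : DGraph n) :
    ∑ v ∈ s, Multiset.countP (fun e => e.2 = v) Γ
      = Multiset.countP (fun e => e.2 ∈ s) Γ := by
  induction Γ using Multiset.induction with
  | empty => simp
  | cons e Γ ih =>
    simp [Multiset.countP_cons, Finset.sum_add_distrib, ih, Finset.sum_ite_eq]

lemma sum_mdeg (s : Finset (Fin n)) (Γ : DGraph n) :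
    ∑ v ∈ s, Γ.mdeg v
      = Multiset.countP (fun e => e.1 ∈ s) Γ + Multiset.countP (fun e => e.2 ∈ s) Γ := by
  simp [DGraph.mdeg, Finset.sum_add_distrib, sum_countP_fst, sum_countP_snd]

lemma countP_split {α : Type*} (p q : α → Prop) [DecidablePred p] [DecidablePred q]
    (s : Multiset α) :
    Multiset.countP p s
      = Multiset.countP (fun a => p a ∧ q a) s + Multiset.countP (fun a => p a ∧ ¬ q a) s := by
  induction s using Multiset.induction with
  | empty => simp
  | cons e s ih =>
    simp only [Multiset.countP_cons, ih]
    by_cases hp : p e <;> by_cases hq : q e <;> simp [hp, hq] <;> omega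


lemma card_evens (m : ℕ) :
    (Finset.univ.filter (fun v : Fin (2 * m) => v.val % 2 = 0)).card = m := by
  conv_rhs => rw [← Finset.card_fin m]
  refine Finset.card_nbij' (fun v => (⟨v.val / 2, by omega⟩ : Fin m))
    (fun i => (⟨2 * i.val, by omega⟩ : Fin (2 * m))) ?_ ?_ ?_ ?_
  · intro v hv; exact Finset.mem_univ _
  · intro i _
    simp only [Finset.mem_coe, Finset.mem_filter, Finset.mem_univ, true_and]; omega
  · intro v hv
    simp only [Finset.mem_coe, Finset.mem_filter, Finset.mem_univ, true_and] at hv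
    apply Fin.ext; simp; omega
  · intro i _
    apply Fin.ext; simp

lemma card_odds (m : ℕ) :
    (Finset.univ.filter (fun v : Fin (2 * m) => ¬ v.val % 2 = 0)).card = m := by
  conv_rhs => rw [← Finset.card_fin m]
  refine Finset.card_nbij' (fun v => (⟨v.val / 2, by omega⟩ : Fin m))
    (fun i => (⟨2 * i.val + 1, by omega⟩ : Fin (2 * m))) ?_ ?_ ?_ ?_
  · intro v hv; exact Finset.mem_univ _
  · intro i _
    simp only [Finset.mem_coe, Finset.mem_filter, Finset.mem_univ, true_and]; omega
  · intro v hv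
    simp only [Finset.mem_coe, Finset.mem_filter, Finset.mem_univ, true_and] at hv
    apply Fin.ext; simp; omega
  · intro i _
    apply Fin.ext; simp; omega

lemma ee_eq_oo {m d : ℕ} (Γ : DGraph (2 * m)) (hdeg : ∀ v, Γ.mdeg v = d) :
    Multiset.countP (fun e : Fin (2*m) × Fin (2*m) => e.1.val % 2 = 0 ∧ e.2.val % 2 = 0) Γ
      = Multiset.countP (fun e : Fin (2*m) × Fin (2*m) => ¬ e.1.val % 2 = 0 ∧ ¬ e.2.val % 2 = 0) Γ := by
  classical
  set E := Finset.univ.filter (fun v : Fin (2 * m) => v.val % 2 = 0) with hE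
  set O := Finset.univ.filter (fun v : Fin (2 * m) => ¬ v.val % 2 = 0) with hO
  have hEsum : ∑ v ∈ E, Γ.mdeg v = d * m := by
    rw [Finset.sum_congr rfl (fun v _ => hdeg v), Finset.sum_const, card_evens m, smul_eq_mul]
    ring
  have hOsum : ∑ v ∈ O, Γ.mdeg v = d * m := by
    rw [Finset.sum_congr rfl (fun v _ => hdeg v), Finset.sum_const, card_odds m, smul_eq_mul]
    ring
  rw [sum_mdeg] at hEsum hOsum
  have e1 : Multiset.countP (fun e : Fin (2*m) × Fin (2*m) => e.1 ∈ E) Γ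
      = Multiset.countP (fun e : Fin (2*m) × Fin (2*m) => e.1.val % 2 = 0) Γ :=
    Multiset.countP_congr rfl (fun e _ => by simp [hE])
  have e2 : Multiset.countP (fun e : Fin (2*m) × Fin (2*m) => e.2 ∈ E) Γ
      = Multiset.countP (fun e : Fin (2*m) × Fin (2*m) => e.2.val % 2 = 0) Γ :=
    Multiset.countP_congr rfl (fun e _ => by simp [hE])
  have o1 : Multiset.countP (fun e : Fin (2*m) × Fin (2*m) => e.1 ∈ O) Γ
      = Multiset.countP (fun e : Fin (2*m) × Fin (2*m) => ¬ e.1.val % 2 = 0) Γ :=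
    Multiset.countP_congr rfl (fun e _ => by simp [hO])
  have o2 : Multiset.countP (fun e : Fin (2*m) × Fin (2*m) => e.2 ∈ O) Γ
      = Multiset.countP (fun e : Fin (2*m) × Fin (2*m) => ¬ e.2.val % 2 = 0) Γ :=
    Multiset.countP_congr rfl (fun e _ => by simp [hO])
  rw [e1, e2] at hEsum
  rw [o1, o2] at hOsum
  rw [countP_split (fun e : Fin (2*m) × Fin (2*m) => e.1.val % 2 = 0)
        (fun e => e.2.val % 2 = 0) Γ,
      countP_split (fun e : Fin (2*m) × Fin (2*m) => e.2.val % 2 = 0)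
        (fun e => e.1.val % 2 = 0) Γ] at hEsum
  rw [countP_split (fun e : Fin (2*m) × Fin (2*m) => ¬ e.1.val % 2 = 0)
        (fun e => e.2.val % 2 = 0) Γ,
      countP_split (fun e : Fin (2*m) × Fin (2*m) => ¬ e.2.val % 2 = 0)
        (fun e => e.1.val % 2 = 0) Γ] at hOsum
  have c1 : Multiset.countP (fun e : Fin (2*m) × Fin (2*m) => e.2.val % 2 = 0 ∧ e.1.val % 2 = 0) Γ
      = Multiset.countP (fun e : Fin (2*m) × Fin (2*m) => e.1.val % 2 = 0 ∧ e.2.val % 2 = 0) Γ :=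
    Multiset.countP_congr rfl (fun e _ => by rw [eq_iff_iff]; exact and_comm)
  have c2 : Multiset.countP (fun e : Fin (2*m) × Fin (2*m) => ¬ e.2.val % 2 = 0 ∧ e.1.val % 2 = 0) Γ
      = Multiset.countP (fun e : Fin (2*m) × Fin (2*m) => e.1.val % 2 = 0 ∧ ¬ e.2.val % 2 = 0) Γ :=
    Multiset.countP_congr rfl (fun e _ => by rw [eq_iff_iff]; exact and_comm)
  have c3 : Multiset.countP (fun e : Fin (2*m) × Fin (2*m) => ¬ e.1.val % 2 = 0 ∧ e.2.val % 2 = 0) Γ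
      = Multiset.countP (fun e : Fin (2*m) × Fin (2*m) => e.2.val % 2 = 0 ∧ ¬ e.1.val % 2 = 0) Γ :=
    Multiset.countP_congr rfl (fun e _ => by rw [eq_iff_iff]; exact and_comm)
  have c4 : Multiset.countP (fun e : Fin (2*m) × Fin (2*m) => ¬ e.2.val % 2 = 0 ∧ ¬ e.1.val % 2 = 0) Γ
      = Multiset.countP (fun e : Fin (2*m) × Fin (2*m) => ¬ e.1.val % 2 = 0 ∧ ¬ e.2.val % 2 = 0) Γ :=
    Multiset.countP_congr rfl (fun e _ => by rw [eq_iff_iff]; exact and_comm)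
  rw [c1, ← c3] at hEsum
  rw [c2, c4] at hOsum
  omega


lemma countP_mono {α : Type*} {p q : α → Prop} [DecidablePred p] [DecidablePred q]
    {s : Multiset α} (h : ∀ a ∈ s, p a → q a) :
    Multiset.countP p s ≤ Multiset.countP q s := by
  induction s using Multiset.induction with
  | empty => simp
  | cons e s ih =>
    simp only [Multiset.countP_cons]
    have h1 := ih (fun a ha => h a (Multiset.mem_cons_of_mem ha))
    have h2 := h e (Multiset.mem_cons_self e s)
    by_cases hp : p e
    · simp [hp, h2 hp]; omega
    · simp [hp]; omega

lemma nodup_le {α : Type*} [DecidableEq α] {s t : Multiset α}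
    (hs : s.Nodup) (h : ∀ a ∈ s, a ∈ t) : s ≤ t := by
  rw [Multiset.le_iff_count]
  intro a
  by_cases ha : a ∈ s
  · rw [Multiset.count_eq_one_of_mem hs ha]
    exact Multiset.one_le_count_iff_mem.mpr (h a ha)
  · simp [Multiset.count_eq_zero_of_notMem ha]


lemma extract_pm {m D : ℕ} (Γ : DGraph (2 * m))
    (hmix : ∀ e ∈ Γ, ¬ (e.1.val % 2 = e.2.val % 2))
    (hdeg : ∀ v, Γ.mdeg v = D + 1) :
    ∃ M : DGraph (2 * m), M.isPM ∧ M ≤ Γ := by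
  classical
  set t : {v : Fin (2 * m) // v.val % 2 = 0} → Finset (Fin (2 * m)) :=
    fun v => Finset.univ.filter
      (fun w => ¬ w.val % 2 = 0 ∧ ((v.1, w) ∈ Γ ∨ (w, v.1) ∈ Γ)) with ht
  have hall : ∀ s : Finset {v : Fin (2 * m) // v.val % 2 = 0},
      s.card ≤ (s.biUnion t).card := by
    intro s
    set N := s.biUnion t with hN
    set s' := s.image Subtype.val with hs'
    have hcard : s'.card = s.card :=
      Finset.card_image_of_injective s Subtype.val_injective
    have hNmem : ∀ e ∈ Γ, e.1 ∈ s' → e.2 ∈ N := by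
      intro e he h1
      rw [hs'] at h1
      obtain ⟨v, hv, hve⟩ := Finset.mem_image.mp h1
      rw [hN]
      apply Finset.mem_biUnion.mpr ⟨v, hv, ?_⟩
      rw [ht]
      simp only [Finset.mem_filter, Finset.mem_univ, true_and]
      have hodd : ¬ e.2.val % 2 = 0 := by
        have := hmix e he
        have : e.1.val % 2 = 0 := hve ▸ v.2
        omega
      exact ⟨hodd, Or.inl (by rw [hve]; exact he)⟩
    have hNmem2 : ∀ e ∈ Γ, e.2 ∈ s' → e.1 ∈ N := by
      intro e he h2
      rw [hs'] at h2
      obtain ⟨v, hv, hve⟩ := Finset.mem_image.mp h2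
      rw [hN]
      apply Finset.mem_biUnion.mpr ⟨v, hv, ?_⟩
      rw [ht]
      simp only [Finset.mem_filter, Finset.mem_univ, true_and]
      have hodd : ¬ e.1.val % 2 = 0 := by
        have := hmix e he
        have : e.2.val % 2 = 0 := hve ▸ v.2
        omega
      exact ⟨hodd, Or.inr (by rw [hve]; exact he)⟩
    have hsum_s : ∑ v ∈ s', Γ.mdeg v = (D + 1) * s'.card := by
      rw [Finset.sum_congr rfl (fun v _ => hdeg v), Finset.sum_const, smul_eq_mul, mul_comm]
    have hsum_N : ∑ v ∈ N, Γ.mdeg v = (D + 1) * N.card := by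
      rw [Finset.sum_congr rfl (fun v _ => hdeg v), Finset.sum_const, smul_eq_mul, mul_comm]
    rw [sum_mdeg] at hsum_s hsum_N
    have k1 : Multiset.countP (fun e => e.1 ∈ s') Γ
        ≤ Multiset.countP (fun e => e.2 ∈ N) Γ :=
      countP_mono (fun e he h => hNmem e he h)
    have k2 : Multiset.countP (fun e => e.2 ∈ s') Γ
        ≤ Multiset.countP (fun e => e.1 ∈ N) Γ :=
      countP_mono (fun e he h => hNmem2 e he h)
    have : (D + 1) * s'.card ≤ (D + 1) * N.card := by omega
    have := Nat.le_of_mul_le_mul_left this (Nat.succ_pos D)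
    omega
  obtain ⟨f, hfinj, hft⟩ :=
    (Finset.all_card_le_biUnion_card_iff_exists_injective t).mp hall
  have hfodd : ∀ v, ¬ (f v).val % 2 = 0 := by
    intro v
    have := hft v
    rw [ht] at this
    simp only [Finset.mem_filter, Finset.mem_univ, true_and] at this
    exact this.1
  have hfedge : ∀ v, (v.1, f v) ∈ Γ ∨ (f v, v.1) ∈ Γ := by
    intro v
    have := hft v
    rw [ht] at this
    simp only [Finset.mem_filter, Finset.mem_univ, true_and] at this
    exact this.2
  -- f is surjective onto odds
  set f' : {v : Fin (2 * m) // v.val % 2 = 0} → {v : Fin (2 * m) // ¬ v.val % 2 = 0} :=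
    fun v => ⟨f v, hfodd v⟩ with hf'
  have hf'inj : Function.Injective f' := by
    intro a b hab
    apply hfinj
    exact congrArg Subtype.val hab
  have hcards : Fintype.card {v : Fin (2 * m) // v.val % 2 = 0}
      = Fintype.card {v : Fin (2 * m) // ¬ v.val % 2 = 0} := by
    rw [Fintype.card_subtype, Fintype.card_subtype, card_evens, card_odds]
  have hf'surj : Function.Surjective f' :=
    ((Fintype.bijective_iff_injective_and_card f').mpr ⟨hf'inj, hcards⟩).2
  -- build the matching
  set edg : {v : Fin (2 * m) // v.val % 2 = 0} → Fin (2 * m) × Fin (2 * m) :=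
    fun v => if (v.1, f v) ∈ Γ then (v.1, f v) else (f v, v.1) with hedg
  have hedgspec : ∀ v, edg v = (v.1, f v) ∨ edg v = (f v, v.1) := by
    intro v; rw [hedg]; dsimp only; split <;> simp
  have hedgmem : ∀ v, edg v ∈ Γ := by
    intro v; rw [hedg]; dsimp only; split
    · assumption
    · rcases hfedge v with h | h
      · contradiction
      · exact h
  have hedginj : Function.Injective edg := by
    intro a b hab
    rcases hedgspec a with ha | ha <;> rcases hedgspec b with hb | hb <;>
      rw [ha, hb] at hab
    · exact Subtype.ext (congrArg Prod.fst hab)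
    · exfalso
      have h1 : a.1 = f b := congrArg Prod.fst hab
      have := hfodd b; have := a.2
      rw [h1] at this; omega
    · exfalso
      have h1 : f a = b.1 := congrArg Prod.fst hab
      have := hfodd a; have := b.2
      rw [← h1] at this; omega
    · exact Subtype.ext (congrArg Prod.snd hab)
  set M : DGraph (2 * m) := Multiset.map edg Finset.univ.val with hM
  have hMnodup : M.Nodup := Multiset.Nodup.map hedginj Finset.univ.nodup
  have hMle : M ≤ Γ := by
    apply nodup_le hMnodup
    intro a ha
    rw [hM] at ha
    obtain ⟨w, _, hw⟩ := Multiset.mem_map.mp ha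
    rw [← hw]; exact hedgmem w
  refine ⟨M, ?_, hMle⟩
  intro v
  have hform : DGraph.mdeg M v =
      ∑ w : {v : Fin (2 * m) // v.val % 2 = 0},
        ((if (edg w).1 = v then 1 else 0) + (if (edg w).2 = v then 1 else 0)) := by
    rw [DGraph.mdeg, hM, Multiset.countP_map, Multiset.countP_map,
        ← Finset.filter_val, ← Finset.filter_val]
    show (Finset.filter _ Finset.univ).card + (Finset.filter _ Finset.univ).card = _
    rw [Finset.card_filter, Finset.card_filter, ← Finset.sum_add_distrib]
  rw [hform]
  by_cases hv : v.val % 2 = 0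
  · set wit : {v : Fin (2 * m) // v.val % 2 = 0} := ⟨v, hv⟩ with hwit
    have hpt : ∀ w, ((if (edg w).1 = v then 1 else 0) + (if (edg w).2 = v then 1 else 0) : ℕ)
        = if wit = w then 1 else 0 := by
      intro w
      have hne : f w ≠ v := by
        intro h; have := hfodd w; rw [h] at this; omega
      have hiff : (w.1 = v) ↔ (wit = w) := by
        constructor
        · intro h; exact Subtype.ext (by rw [hwit]; exact h.symm)
        · intro h; rw [← h]
      rcases hedgspec w with hw | hw <;> rw [hw]
      · simp only [hne, if_neg, hne]
        by_cases h : w.1 = v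
        · simp [h, hiff.mp h, hne]
        · have hne2 := fun hh => h (hiff.mpr hh)
          simp [h, hne, hne2]
          exact hne2
      · by_cases h : w.1 = v
        · simp [h, hiff.mp h, hne]
        · have hne2 := fun hh => h (hiff.mpr hh)
          simp [h, hne, hne2]
          exact hne2
    rw [Finset.sum_congr rfl (fun w _ => hpt w), Finset.sum_ite_eq]
    simp
  · obtain ⟨w₀, hw₀⟩ := hf'surj ⟨v, hv⟩
    have hfw₀ : f w₀ = v := congrArg Subtype.val hw₀
    have hpt : ∀ w, ((if (edg w).1 = v then 1 else 0) + (if (edg w).2 = v then 1 else 0) : ℕ)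
        = if w₀ = w then 1 else 0 := by
      intro w
      have hne : w.1 ≠ v := by
        intro h; have := w.2; rw [h] at this; omega
      have hiff : (f w = v) ↔ (w₀ = w) := by
        constructor
        · intro h
          exact (hfinj (by rw [hfw₀, h])).symm
        · intro h; rw [← h, hfw₀]
      rcases hedgspec w with hw | hw <;> rw [hw]
      · by_cases h : f w = v
        · simp [h, hiff.mp h, hne]
        · have hne2 := fun hh => h (hiff.mpr hh)
          simp [h, hne, hne2]
          exact hne2
      · by_cases h : f w = v
        · simp [h, hiff.mp h, hne]
        · have hne2 := fun hh => h (hiff.mpr hh)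
          simp [h, hne, hne2]
          exact hne2
    rw [Finset.sum_congr rfl (fun w _ => hpt w), Finset.sum_ite_eq]
    simp


lemma XG_cons_pair (x y : Fin n) (Γ : DGraph n) :
    XG ((x, y) ::ₘ Γ) = g x y * XG Γ := XG_cons (x, y) Γ

lemma mdeg_cons_pair (x y : Fin n) (Γ : DGraph n) (v : Fin n) :
    DGraph.mdeg ((x, y) ::ₘ Γ) v =
      ((if x = v then 1 else 0) + (if y = v then 1 else 0)) + Γ.mdeg v :=
  mdeg_cons (x, y) Γ v

lemma mdeg_add (A B : DGraph n) (v : Fin n) :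
    (A + B).mdeg v = A.mdeg v + B.mdeg v := by
  simp [DGraph.mdeg, Multiset.countP_add]; ring

lemma XG_zero' : XG (0 : DGraph n) = 1 := by simp [XG]

lemma XG_sum {ι : Type*} (s : Finset ι) (M : ι → DGraph n) :
    XG (∑ j ∈ s, M j) = ∏ j ∈ s, XG (M j) := by
  induction s using Finset.cons_induction with
  | empty => simp [XG]
  | cons a s ha ih => rw [Finset.sum_cons, Finset.prod_cons, XG_add, ih]

lemma bip {m : ℕ} : ∀ (D : ℕ) (Γ : DGraph (2 * m)),
    (∀ e ∈ Γ, ¬ (e.1.val % 2 = e.2.val % 2)) → (∀ v, Γ.mdeg v = D) →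
    ∃ M : Fin D → DGraph (2 * m), (∀ j, (M j).isPM) ∧ Γ = ∑ j, M j := by
  intro D
  induction D with
  | zero =>
    intro Γ hmix hdeg
    have hΓ : Γ = 0 := by
      by_contra h
      obtain ⟨e, he⟩ := Multiset.exists_mem_of_ne_zero h
      have hpos : 0 < Multiset.countP (fun x : Fin (2*m) × Fin (2*m) => x.1 = e.1) Γ :=
        Multiset.countP_pos.mpr ⟨e, he, rfl⟩
      have hd := hdeg e.1
      rw [DGraph.mdeg] at hd
      omega
    refine ⟨fun j => j.elim0, fun j => j.elim0, ?_⟩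
    simp [hΓ]
  | succ D ih =>
    intro Γ hmix hdeg
    obtain ⟨M₀, hM₀pm, hM₀le⟩ := extract_pm Γ hmix hdeg
    have hsplit : Γ = M₀ + (Γ - M₀) := by
      rw [add_comm]; exact (tsub_add_cancel_of_le hM₀le).symm
    have hsub : Γ - M₀ ≤ Γ := tsub_le_self
    have hmix' : ∀ e ∈ Γ - M₀, ¬ (e.1.val % 2 = e.2.val % 2) :=
      fun e he => hmix e (Multiset.mem_of_le hsub he)
    have hdeg' : ∀ v, (Γ - M₀).mdeg v = D := by
      intro v
      have h1 := hdeg v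
      rw [hsplit, mdeg_add] at h1
      have h2 := hM₀pm v
      omega
    obtain ⟨M, hMpm, hMsum⟩ := ih (Γ - M₀) hmix' hdeg'
    refine ⟨Fin.cons M₀ M, ?_, ?_⟩
    · intro j
      refine Fin.cases ?_ ?_ j
      · exact hM₀pm
      · intro i; exact hMpm i
    · rw [Fin.sum_cons, ← hMsum, ← hsplit]

lemma main_aux {m d : ℕ} : ∀ (k : ℕ) (Γ : DGraph (2 * m)),
    Multiset.countP (fun e : Fin (2*m) × Fin (2*m) => e.1.val % 2 = e.2.val % 2) Γ = k →
    (∀ v, Γ.mdeg v = d) →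
    XG Γ ∈ AddSubgroup.closure
      {p | ∃ Δ : Fin d → DGraph (2 * m),
        (∀ j, (Δ j).isPM) ∧ p = ∏ j, XG (Δ j)} := by
  intro k
  induction k using Nat.strong_induction_on with
  | _ k IH =>
    intro Γ hk hdeg
    by_cases h0 : Multiset.countP (fun e : Fin (2*m) × Fin (2*m) => e.1.val % 2 = e.2.val % 2) Γ = 0
    · have hmix : ∀ e ∈ Γ, ¬ (e.1.val % 2 = e.2.val % 2) := by
        intro e he hbad
        have : 0 < Multiset.countP (fun e : Fin (2*m) × Fin (2*m) => e.1.val % 2 = e.2.val % 2) Γ :=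
          Multiset.countP_pos.mpr ⟨e, he, hbad⟩
        omega
      rcases d with _ | D
      · -- d = 0
        obtain ⟨M, hMpm, hsum⟩ := bip 0 Γ hmix hdeg
        apply AddSubgroup.subset_closure
        exact ⟨M, hMpm, by rw [hsum, XG_sum]⟩
      · obtain ⟨M, hMpm, hsum⟩ := bip (D + 1) Γ hmix hdeg
        apply AddSubgroup.subset_closure
        exact ⟨M, hMpm, by rw [hsum, XG_sum]⟩
    · -- there is a bad edge; find an even-even and an odd-odd one
      have hsplitbad : Multiset.countP (fun e : Fin (2*m) × Fin (2*m) => e.1.val % 2 = e.2.val % 2) Γ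
          = Multiset.countP (fun e : Fin (2*m) × Fin (2*m) => e.1.val % 2 = 0 ∧ e.2.val % 2 = 0) Γ
            + Multiset.countP (fun e : Fin (2*m) × Fin (2*m) => ¬ e.1.val % 2 = 0 ∧ ¬ e.2.val % 2 = 0) Γ := by
        rw [countP_split (fun e : Fin (2*m) × Fin (2*m) => e.1.val % 2 = e.2.val % 2)
          (fun e => e.1.val % 2 = 0) Γ]
        congr 1
        · exact Multiset.countP_congr rfl (fun e _ => by rw [eq_iff_iff]; constructor <;> intro h <;> omega)
        · exact Multiset.countP_congr rfl (fun e _ => by rw [eq_iff_iff]; constructor <;> intro h <;> omega)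
      have heo := ee_eq_oo (d := d) Γ hdeg
      have hee : 0 < Multiset.countP (fun e : Fin (2*m) × Fin (2*m) => e.1.val % 2 = 0 ∧ e.2.val % 2 = 0) Γ := by
        omega
      have hoo : 0 < Multiset.countP (fun e : Fin (2*m) × Fin (2*m) => ¬ e.1.val % 2 = 0 ∧ ¬ e.2.val % 2 = 0) Γ := by
        omega
      obtain ⟨e1, he1, he1p⟩ := Multiset.countP_pos.mp hee
      obtain ⟨e2, he2, he2p⟩ := Multiset.countP_pos.mp hoo
      have hne : e2 ≠ e1 := by
        intro h; rw [h] at he2p; exact he2p.1 he1p.1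
      have he2' : e2 ∈ Γ.erase e1 := (Multiset.mem_erase_of_ne hne).mpr he2
      have hsplit : Γ = e1 ::ₘ e2 ::ₘ (Γ.erase e1).erase e2 := by
        rw [Multiset.cons_erase he2', Multiset.cons_erase he1]
      obtain ⟨a, b⟩ := e1
      obtain ⟨c, d'⟩ := e2
      simp only at he1p he2p
      set Γ₀ := (Γ.erase (a, b)).erase (c, d') with hΓ₀
      set Γ1 : DGraph (2 * m) := (a, c) ::ₘ (b, d') ::ₘ Γ₀ with hΓ1
      set Γ2 : DGraph (2 * m) := (a, d') ::ₘ (b, c) ::ₘ Γ₀ with hΓ2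
      have hXG : XG Γ = XG Γ1 - XG Γ2 := by
        rw [hsplit, hΓ1, hΓ2, XG_cons_pair, XG_cons_pair, XG_cons_pair, XG_cons_pair,
            XG_cons_pair, XG_cons_pair]
        have := plucker a b c d'
        linear_combination (XG Γ₀) * this
      have hdeg1 : ∀ v, Γ1.mdeg v = d := by
        intro v
        have h1 := hdeg v
        rw [hsplit] at h1
        rw [hΓ1]
        rw [mdeg_cons_pair, mdeg_cons_pair] at h1 ⊢
        omega
      have hdeg2 : ∀ v, Γ2.mdeg v = d := by
        intro v
        have h1 := hdeg v
        rw [hsplit] at h1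
        rw [hΓ2]
        rw [mdeg_cons_pair, mdeg_cons_pair] at h1 ⊢
        omega
      have hbadsum : Multiset.countP (fun e : Fin (2*m) × Fin (2*m) => e.1.val % 2 = e.2.val % 2) Γ
          = Multiset.countP (fun e : Fin (2*m) × Fin (2*m) => e.1.val % 2 = e.2.val % 2) Γ₀ + 2 := by
        conv_lhs => rw [hsplit]
        rw [Multiset.countP_cons, Multiset.countP_cons]
        have p1 : (a : Fin (2*m)).val % 2 = (b : Fin (2*m)).val % 2 := by omega
        have p2 : (c : Fin (2*m)).val % 2 = (d' : Fin (2*m)).val % 2 := by omega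
        simp only [p1, if_pos, p2] <;> omega
      have hbad1 : Multiset.countP (fun e : Fin (2*m) × Fin (2*m) => e.1.val % 2 = e.2.val % 2) Γ1
          = Multiset.countP (fun e : Fin (2*m) × Fin (2*m) => e.1.val % 2 = e.2.val % 2) Γ₀ := by
        rw [hΓ1, Multiset.countP_cons, Multiset.countP_cons]
        have q1 : ¬ ((a : Fin (2*m)).val % 2 = (c : Fin (2*m)).val % 2) := by omega
        have q2 : ¬ ((b : Fin (2*m)).val % 2 = (d' : Fin (2*m)).val % 2) := by omega
        simp [q1, q2] <;> omega
      have hbad2 : Multiset.countP (fun e : Fin (2*m) × Fin (2*m) => e.1.val % 2 = e.2.val % 2) Γ2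
          = Multiset.countP (fun e : Fin (2*m) × Fin (2*m) => e.1.val % 2 = e.2.val % 2) Γ₀ := by
        rw [hΓ2, Multiset.countP_cons, Multiset.countP_cons]
        have q1 : ¬ ((a : Fin (2*m)).val % 2 = (d' : Fin (2*m)).val % 2) := by omega
        have q2 : ¬ ((b : Fin (2*m)).val % 2 = (c : Fin (2*m)).val % 2) := by omega
        simp [q1, q2] <;> omega
      rw [hXG]
      have hlt : Multiset.countP (fun e : Fin (2*m) × Fin (2*m) => e.1.val % 2 = e.2.val % 2) Γ₀ < k := by
        omega
      exact AddSubgroup.sub_mem _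
        (IH _ (by rw [← hbad1] at hlt; exact hbad1 ▸ hlt) Γ1 hbad1 hdeg1)
        (IH _ (hbad2 ▸ hlt) Γ2 hbad2 hdeg2)


end Kempe

/-- **Kempe's theorem, equilateral case.** Let `n = 2m` and `d ≥ 1`.  Every invariant
`X_Γ` with `Γ` a directed graph on `{1,…,n}` of multidegree `(d,…,d)` lies in the
additive subgroup of `ℤ[u,v]` generated by the products `X_{Δ_1}⋯X_{Δ_d}` with each
`Δ_j` a perfect matching on `{1,…,n}`. -/

theorem kempe_equilateral (m : ℕ) (d : ℕ) (hd : 1 ≤ d)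
    (Γ : DGraph (2 * m)) (hΓl : Γ.loopless) (hΓdeg : ∀ v, Γ.mdeg v = d) :
    XG Γ ∈ AddSubgroup.closure
      {p | ∃ Δ : Fin d → DGraph (2 * m),
        (∀ j, (Δ j).isPM) ∧ p = ∏ j, XG (Δ j)} :=
  Kempe.main_aux _ Γ rfl hΓdeg
end

section
/- (Torus invariants of the chart of the Grassmannian.) Fix m ≥ 2, and let A be the localization of the polynomial ring ℂ[u_2,…,u_m, v_{m+1},…,v_{2m−1}] at the multiplicative set generated by the elements u_i v_j − 1, for 2 ≤ i ≤ m and m+1 ≤ j ≤ 2m−1. Give A the ℤ-grading determined by deg u_i = −1 and deg v_j = +1 (this is well defined since each u_i v_j − 1 is homogeneous of degree 0). Then the degree-0 homogeneous component of A equals the ℂ-subalgebra of A generated by the elements u_i v_j together with the elements (u_i v_j − 1)^{-1}, for 2 ≤ i ≤ m and m+1 ≤ j ≤ 2m−1. -/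
open MvPolynomial

/-- The polynomial ring `ℂ[u_2,…,u_m, v_{m+1},…,v_{2m−1}]` in `2(m−1)` variables:
`Sum.inl i` is the `u`-variable `u_{i+2}` and `Sum.inr j` is the `v`-variable
`v_{m+1+j}`. -/
abbrev BRing (m : ℕ) := MvPolynomial (Fin (m - 1) ⊕ Fin (m - 1)) ℂ

/-- The multiplicative set generated by the elements `u_i v_j − 1`. -/
noncomputable def uvSubmonoid (m : ℕ) : Submonoid (BRing m) :=
  Submonoid.closure
    {q | ∃ (i j : Fin (m - 1)), q = X (Sum.inl i) * X (Sum.inr j) - 1}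

/-- `A`: the localization of `ℂ[u_2,…,u_m, v_{m+1},…,v_{2m−1}]` at the multiplicative
set generated by the `u_i v_j − 1`. -/
abbrev ARing (m : ℕ) := Localization (uvSubmonoid m)

/-- The weight (`ℤ`-degree) of a monomial exponent, determined by `deg u_i = −1` and
`deg v_j = +1`. -/
def monWeight (m : ℕ) (σ : Fin (m - 1) ⊕ Fin (m - 1) →₀ ℕ) : ℤ :=
  σ.sum (fun s k => Sum.elim (fun _ => -(k : ℤ)) (fun _ => (k : ℤ)) s)

/-- A polynomial in the `u`s and `v`s is homogeneous of degree `0` for the grading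
`deg u_i = −1`, `deg v_j = +1` if all its monomials have weight `0`. -/
def IsWeightZero (m : ℕ) (x : BRing m) : Prop :=
  ∀ σ ∈ x.support, monWeight m σ = 0

/-- The degree-`0` homogeneous component of `A` for the grading determined by
`deg u_i = −1` and `deg v_j = +1` (well defined as each `u_i v_j − 1` is homogeneous of
degree `0`): an element of `A` lies in it iff it can be written as `x / s` with `s` in
the multiplicative set and `x` homogeneous of degree `0`. -/
def degreeZeroPart (m : ℕ) : Set (ARing m) :=
  {a | ∃ (x : BRing m) (s : uvSubmonoid m),
    IsWeightZero m x ∧ a * algebraMap (BRing m) (ARing m) s.val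
      = algebraMap (BRing m) (ARing m) x}

/-! A fraction `x / s` is of degree `0` exactly when `x` has weight `0`. A monomial of weight `0`
contains as many `u`s as `v`s, so it is a product of the `u_i v_j`, and `s⁻¹` is a product of the
`(u_i v_j - 1)⁻¹`. Conversely, fractions with numerator of weight `0` form a subalgebra, which
contains both kinds of generators. -/

section UVWeight

variable {ι κ R : Type*} [CommSemiring R]

variable (ι κ) in
def uvWeight : ι ⊕ κ → ℤ := Sum.elim (fun _ => -1) (fun _ => 1)

variable (ι κ R) in
def uvProducts : Set (MvPolynomial (ι ⊕ κ) R) :=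
  Set.range fun p : ι × κ => X (Sum.inl p.1) * X (Sum.inr p.2)

lemma weight_uvWeight [Fintype ι] [Fintype κ] (σ : ι ⊕ κ →₀ ℕ) :
    Finsupp.weight (uvWeight ι κ) σ = ∑ j, (σ (Sum.inr j) : ℤ) - ∑ i, (σ (Sum.inl i) : ℤ) := by
  simp [Finsupp.weight_eq_sum, Fintype.sum_sum_type, uvWeight, sub_eq_neg_add]

lemma weight_uvWeight_single_add_single (i : ι) (j : κ) :
    Finsupp.weight (uvWeight ι κ)
      (Finsupp.single (Sum.inl i) 1 + Finsupp.single (Sum.inr j) 1) = 0 := by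
  simp [Finsupp.weight_single, uvWeight]

lemma exists_ne_zero_of_weight_uvWeight_eq_zero [Fintype ι] [Fintype κ] {σ : ι ⊕ κ →₀ ℕ}
    (hσ : σ ≠ 0) (hw : Finsupp.weight (uvWeight ι κ) σ = 0) :
    (∃ i, σ (Sum.inl i) ≠ 0) ∧ ∃ j, σ (Sum.inr j) ≠ 0 := by
  rw [weight_uvWeight, sub_eq_zero] at hw
  have hsum : ∑ j, σ (Sum.inr j) = ∑ i, σ (Sum.inl i) := by exact_mod_cast hw
  obtain ⟨s, hs⟩ := Finsupp.ne_iff.mp hσ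
  have hu : ∑ i, σ (Sum.inl i) ≠ 0 := by
    rcases s with i | j
    · exact fun h => hs (Finset.sum_eq_zero_iff.mp h i (Finset.mem_univ i))
    · rw [← hsum]
      exact fun h => hs (Finset.sum_eq_zero_iff.mp h j (Finset.mem_univ j))
  obtain ⟨i, -, hi⟩ := Finset.exists_ne_zero_of_sum_ne_zero hu
  obtain ⟨j, -, hj⟩ := Finset.exists_ne_zero_of_sum_ne_zero (hsum ▸ hu)
  exact ⟨⟨i, hi⟩, ⟨j, hj⟩⟩

lemma monomial_mem_adjoin_uvProducts [Fintype ι] [Fintype κ] (c : R) (σ : ι ⊕ κ →₀ ℕ)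
    (hw : Finsupp.weight (uvWeight ι κ) σ = 0) :
    monomial σ c ∈ Algebra.adjoin R (uvProducts ι κ R) := by
  induction σ using WellFoundedLT.induction with
  | ind σ ih =>
  by_cases hσ : σ = 0
  · subst hσ
    rw [monomial_zero', ← algebraMap_eq]
    exact Subalgebra.algebraMap_mem _ c
  obtain ⟨⟨i, hi⟩, ⟨j, hj⟩⟩ := exists_ne_zero_of_weight_uvWeight_eq_zero hσ hw
  set δ : ι ⊕ κ →₀ ℕ := Finsupp.single (Sum.inl i) 1 + Finsupp.single (Sum.inr j) 1
  have hδ : δ ≤ σ := by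
    intro s
    classical
    rcases s with s | s <;> simp only [δ, Finsupp.coe_add, Pi.add_apply, Finsupp.single_apply] <;>
      split_ifs <;> simp_all <;> omega
  have hστ : σ = (σ - δ) + δ := (tsub_add_cancel_of_le hδ).symm
  have hlt : σ - δ < σ :=
    (lt_add_of_pos_right _ (by simp [δ, pos_iff_ne_zero])).trans_eq (tsub_add_cancel_of_le hδ)
  have hτw : Finsupp.weight (uvWeight ι κ) (σ - δ) = 0 := by
    rwa [hστ, map_add, weight_uvWeight_single_add_single, add_zero] at hw
  have hmonomial : (monomial σ c : MvPolynomial (ι ⊕ κ) R) =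
      monomial (σ - δ) c * (X (Sum.inl i) * X (Sum.inr j)) := by
    rw [X, X, monomial_mul, monomial_mul, one_mul, mul_one, ← hστ]
  rw [hmonomial]
  exact mul_mem (ih _ hlt hτw) (Algebra.subset_adjoin ⟨(i, j), rfl⟩)

theorem isWeightedHomogeneous_uvWeight_zero_iff_mem_adjoin [Fintype ι] [Fintype κ]
    {p : MvPolynomial (ι ⊕ κ) R} :
    IsWeightedHomogeneous (uvWeight ι κ) p 0 ↔ p ∈ Algebra.adjoin R (uvProducts ι κ R) := by
  refine ⟨fun hp => ?_, fun hp => ?_⟩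
  · induction hp using IsWeightedHomogeneous.induction_on with
    | zero => exact zero_mem _
    | add _ _ _ _ hp hq => exact add_mem hp hq
    | monomial σ c hσ => exact monomial_mem_adjoin_uvProducts c σ hσ
  · induction hp using Algebra.adjoin_induction with
    | mem _ h =>
      obtain ⟨⟨i, j⟩, rfl⟩ := h
      simpa [uvWeight] using (isWeightedHomogeneous_X R (uvWeight ι κ) (Sum.inl i)).mul
        (isWeightedHomogeneous_X R (uvWeight ι κ) (Sum.inr j))
    | algebraMap c => exact isWeightedHomogeneous_C _ c
    | add _ _ _ _ hp hq => exact hp.add hq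
    | mul _ _ _ _ hp hq => simpa using hp.mul hq

end UVWeight

section Localization

variable {K R S : Type*} [CommSemiring K] [CommSemiring R] [CommSemiring S] [Algebra K S]
  [Algebra R S]

lemma exists_mul_eq_one_mem_adjoin {T : Set R} (hT : ∀ t ∈ T, IsUnit (algebraMap R S t))
    {s : R} (hs : s ∈ Submonoid.closure T) :
    ∃ b ∈ Algebra.adjoin K {a : S | ∃ t ∈ T, a * algebraMap R S t = 1},
      b * algebraMap R S s = 1 := by
  induction hs using Submonoid.closure_induction with
  | mem t ht =>
    obtain ⟨u, hu⟩ := hT t ht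
    exact ⟨↑u⁻¹, Algebra.subset_adjoin ⟨t, ht, hu ▸ u.inv_mul⟩, hu ▸ u.inv_mul⟩
  | one => exact ⟨1, one_mem _, by simp⟩
  | mul s s' _ _ hs hs' =>
    obtain ⟨b, hb, hbs⟩ := hs
    obtain ⟨b', hb', hbs'⟩ := hs'
    refine ⟨b * b', mul_mem hb hb', ?_⟩
    rw [map_mul, mul_mul_mul_comm, hbs, hbs', one_mul]

theorem setOf_mul_algebraMap_eq_algebraMap_eq_adjoin [Algebra K R] [IsScalarTower K R S]
    (G T : Set R) (hTG : T ⊆ Algebra.adjoin K G) (hT : ∀ t ∈ T, IsUnit (algebraMap R S t)) :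
    {a : S | ∃ x ∈ Algebra.adjoin K G, ∃ s ∈ Submonoid.closure T,
        a * algebraMap R S s = algebraMap R S x} =
      Algebra.adjoin K (algebraMap R S '' G ∪ {a | ∃ t ∈ T, a * algebraMap R S t = 1}) := by
  ext a
  constructor
  · rintro ⟨x, hx, s, hs, hax⟩
    obtain ⟨b, hb, hbs⟩ := exists_mul_eq_one_mem_adjoin (K := K) hT hs
    have hx' : algebraMap R S x ∈ Algebra.adjoin K (algebraMap R S '' G) := by
      have := (Subalgebra.mem_map (f := IsScalarTower.toAlgHom K R S)).mpr ⟨x, hx, rfl⟩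
      rwa [← Algebra.adjoin_image] at this
    have ha : a = algebraMap R S x * b := by
      rw [← hax, mul_right_comm, mul_assoc, hbs, mul_one]
    exact ha ▸ mul_mem (Algebra.adjoin_mono Set.subset_union_left hx')
      (Algebra.adjoin_mono Set.subset_union_right hb)
  · intro ha
    have hclosure : Submonoid.closure T ≤ (Algebra.adjoin K G).toSubmonoid :=
      Submonoid.closure_le.mpr hTG
    induction ha using Algebra.adjoin_induction with
    | mem a h =>
      rcases h with ⟨g, hg, rfl⟩ | ⟨t, ht, hat⟩
      · exact ⟨g, Algebra.subset_adjoin hg, 1, one_mem _, by simp⟩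
      · exact ⟨1, one_mem _, t, Submonoid.subset_closure ht, by simpa using hat⟩
    | algebraMap c =>
      exact ⟨algebraMap K R c, Subalgebra.algebraMap_mem _ c, 1, one_mem _, by
        simp [IsScalarTower.algebraMap_apply K R S]⟩
    | add a a' _ _ ha ha' =>
      obtain ⟨x, hx, s, hs, hax⟩ := ha
      obtain ⟨x', hx', s', hs', hax'⟩ := ha'
      refine ⟨x * s' + x' * s, add_mem (mul_mem hx (hclosure hs')) (mul_mem hx' (hclosure hs)),
        s * s', mul_mem hs hs', ?_⟩
      rw [map_add, map_mul, map_mul, map_mul, ← hax, ← hax']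
      ring
    | mul a a' _ _ ha ha' =>
      obtain ⟨x, hx, s, hs, hax⟩ := ha
      obtain ⟨x', hx', s', hs', hax'⟩ := ha'
      refine ⟨x * x', mul_mem hx hx', s * s', mul_mem hs hs', ?_⟩
      rw [map_mul, map_mul, ← hax, ← hax']
      ring

end Localization

lemma monWeight_eq_weight {m : ℕ} (σ : Fin (m - 1) ⊕ Fin (m - 1) →₀ ℕ) :
    monWeight m σ = Finsupp.weight (uvWeight (Fin (m - 1)) (Fin (m - 1))) σ := by
  rw [monWeight, Finsupp.weight_apply]
  congr! 2 with s k
  cases s <;> simp [uvWeight]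

lemma isWeightZero_iff_mem_adjoin {m : ℕ} {x : BRing m} :
    IsWeightZero m x ↔ x ∈ Algebra.adjoin ℂ (uvProducts (Fin (m - 1)) (Fin (m - 1)) ℂ) := by
  rw [← isWeightedHomogeneous_uvWeight_zero_iff_mem_adjoin, IsWeightZero, IsWeightedHomogeneous]
  simp only [mem_support_iff, monWeight_eq_weight]

theorem degree_zero_part_eq_adjoin_general (m : ℕ) :
    degreeZeroPart m =
      (Algebra.adjoin ℂ
        ({a | ∃ (i j : Fin (m - 1)),
            a = algebraMap (BRing m) (ARing m) (X (Sum.inl i) * X (Sum.inr j))} ∪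
         {a | ∃ (i j : Fin (m - 1)),
            a * algebraMap (BRing m) (ARing m) (X (Sum.inl i) * X (Sum.inr j) - 1) = 1})
        : Set (ARing m)) := by
  set G := uvProducts (Fin (m - 1)) (Fin (m - 1)) ℂ
  set T : Set (BRing m) := {q | ∃ (i j : Fin (m - 1)), q = X (Sum.inl i) * X (Sum.inr j) - 1}
  have hTG : T ⊆ Algebra.adjoin ℂ G := by
    rintro _ ⟨i, j, rfl⟩
    exact sub_mem (Algebra.subset_adjoin ⟨(i, j), rfl⟩) (one_mem _)
  have hT (t) (ht : t ∈ T) : IsUnit (algebraMap (BRing m) (ARing m) t) :=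
    IsLocalization.map_units (ARing m) (⟨t, Submonoid.subset_closure ht⟩ : uvSubmonoid m)
  have hdegreeZero : degreeZeroPart m = {a | ∃ x ∈ Algebra.adjoin ℂ G,
      ∃ s ∈ Submonoid.closure T,
        a * algebraMap (BRing m) (ARing m) s = algebraMap (BRing m) (ARing m) x} := by
    ext a
    simp [degreeZeroPart, isWeightZero_iff_mem_adjoin, uvSubmonoid, G, T]
  rw [hdegreeZero, setOf_mul_algebraMap_eq_algebraMap_eq_adjoin G T hTG hT]
  congr 2
  ext a
  simp [G, T, uvProducts, eq_comm]

/-- **Torus invariants of the chart of the Grassmannian.** For `m ≥ 2`, the degree-`0`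
homogeneous component of `A` (graded by `deg u_i = −1`, `deg v_j = +1`) equals the
`ℂ`-subalgebra of `A` generated by the elements `u_i v_j` together with the elements
`(u_i v_j − 1)⁻¹`. -/
theorem degree_zero_part_eq_adjoin (m : ℕ) (hm : 2 ≤ m) :
    degreeZeroPart m =
      (Algebra.adjoin ℂ
        ({a | ∃ (i j : Fin (m - 1)),
            a = algebraMap (BRing m) (ARing m) (X (Sum.inl i) * X (Sum.inr j))} ∪
         {a | ∃ (i j : Fin (m - 1)),
            a * algebraMap (BRing m) (ARing m) (X (Sum.inl i) * X (Sum.inr j) - 1) = 1})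
        : Set (ARing m)) :=
  degree_zero_part_eq_adjoin_general m
end

section
/- (Reduction to bipartite graphs via Plücker relations.) Let n = 2m, let A ⊔ B be a partition of {1,…,n} with |A| = |B| = m, and let Γ be a directed graph on {1,…,n} of multidegree (d,…,d). Then there exist finitely many directed graphs Γ_1,…,Γ_r on {1,…,n}, each of multidegree (d,…,d) and each of whose edges has one endpoint in A and one endpoint in B, and signs ε_1,…,ε_r ∈ {1,−1}, such that X_Γ = Σ_i ε_i X_{Γ_i}. Moreover each edge of Γ having one endpoint in A and one in B occurs (with its multiplicity) in every Γ_i. -/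
open MvPolynomial

/-!
Write `p i j = u_j v_i - u_i v_j`. The three-term Plücker relation
`p i j * p k l = p i k * p j l - p i l * p j k` trades an edge `(i, j)` inside `A` and an edge
`(k, l)` inside `Aᶜ` for two pairs of edges joining `A` to `Aᶜ`, without changing degrees or
the other edges. Summing the degrees over `A` and over `Aᶜ` shows that a `d`-regular graph has
as many edges inside `A` as inside `Aᶜ` when `|A| = |Aᶜ|`, so the relation can be applied until
no edge lies inside `A`, and then none lies inside `Aᶜ` either.
-/

namespace DGraph

variable {n : ℕ}

abbrev IsCrossing (A : Finset (Fin n)) (e : Fin n × Fin n) : Prop :=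
  (e.1 ∈ A ∧ e.2 ∉ A) ∨ (e.2 ∈ A ∧ e.1 ∉ A)

def HasBipartiteExpansion (A : Finset (Fin n)) (d : ℕ) (Γ : DGraph n) : Prop :=
  ∃ (r : ℕ) (Γs : Fin r → DGraph n) (ε : Fin r → ℤ),
    (∀ i, (Γs i).loopless ∧ (∀ v, (Γs i).mdeg v = d) ∧ ∀ e ∈ Γs i, IsCrossing A e) ∧
    (∀ i, ε i = 1 ∨ ε i = -1) ∧
    XG Γ = ∑ i, ε i • XG (Γs i) ∧
    ∀ i, Γ.filter (IsCrossing A) ≤ Γs i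

theorem loopless_cons_iff {e : Fin n × Fin n} {Γ : DGraph n} :
    loopless (e ::ₘ Γ) ↔ e.1 ≠ e.2 ∧ Γ.loopless := by
  simp [loopless]

theorem mdeg_cons (e : Fin n × Fin n) (Γ : DGraph n) (v : Fin n) :
    mdeg (e ::ₘ Γ) v =
      Γ.mdeg v + (if e.1 = v then 1 else 0) + (if e.2 = v then 1 else 0) := by
  simp only [mdeg, Multiset.countP_cons]
  split_ifs <;> omega

theorem sum_mdeg (A : Finset (Fin n)) (Γ : DGraph n) :
    ∑ v ∈ A, Γ.mdeg v =
      2 * Γ.countP (fun e => e.1 ∈ A ∧ e.2 ∈ A) + Γ.countP (IsCrossing A) := by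
  induction Γ using Multiset.induction_on with
  | empty => simp [mdeg]
  | cons e Γ ih =>
    simp only [mdeg_cons, Finset.sum_add_distrib, Finset.sum_ite_eq, Multiset.countP_cons, ih]
    by_cases h₁ : e.1 ∈ A <;> by_cases h₂ : e.2 ∈ A <;> simp [IsCrossing, h₁, h₂] <;> omega

theorem countP_inside_eq_countP_outside {A : Finset (Fin n)} (hA : A.card = Aᶜ.card)
    {d : ℕ} {Γ : DGraph n} (hdeg : ∀ v, Γ.mdeg v = d) :
    Γ.countP (fun e => e.1 ∈ A ∧ e.2 ∈ A) = Γ.countP (fun e => e.1 ∉ A ∧ e.2 ∉ A) := by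
  have hin := sum_mdeg A Γ
  have hout := sum_mdeg Aᶜ Γ
  have hcross : Γ.countP (IsCrossing Aᶜ) = Γ.countP (IsCrossing A) :=
    Multiset.countP_congr rfl fun e _ => by
      simp only [IsCrossing, Finset.mem_compl, not_not, eq_iff_iff]
      tauto
  simp only [hdeg, Finset.sum_const, smul_eq_mul, Finset.mem_compl, hcross] at hin hout
  rw [← hA] at hout
  omega

theorem XG_cons (e : Fin n × Fin n) (Γ : DGraph n) :
    XG (e ::ₘ Γ) =
      (X (Sum.inl e.2) * X (Sum.inr e.1) - X (Sum.inl e.1) * X (Sum.inr e.2)) * XG Γ := by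
  simp [XG]

theorem XG_plucker (i j k l : Fin n) (Γ : DGraph n) :
    XG ((i, j) ::ₘ (k, l) ::ₘ Γ) =
      XG ((i, k) ::ₘ (j, l) ::ₘ Γ) - XG ((i, l) ::ₘ (j, k) ::ₘ Γ) := by
  simp only [XG_cons]
  ring

variable {A : Finset (Fin n)} {d : ℕ}

theorem hasBipartiteExpansion_of_forall_isCrossing {Γ : DGraph n} (hl : Γ.loopless)
    (hdeg : ∀ v, Γ.mdeg v = d) (hcross : ∀ e ∈ Γ, IsCrossing A e) :
    HasBipartiteExpansion A d Γ :=
  ⟨1, fun _ => Γ, fun _ => 1, fun _ => ⟨hl, hdeg, hcross⟩, fun _ => Or.inl rfl, by simp,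
    fun _ => Multiset.filter_le _ _⟩

theorem HasBipartiteExpansion.of_XG_eq_sub {Γ Γ₁ Γ₂ : DGraph n}
    (h₁ : HasBipartiteExpansion A d Γ₁) (h₂ : HasBipartiteExpansion A d Γ₂)
    (hX : XG Γ = XG Γ₁ - XG Γ₂) (hle₁ : Γ.filter (IsCrossing A) ≤ Γ₁.filter (IsCrossing A))
    (hle₂ : Γ.filter (IsCrossing A) ≤ Γ₂.filter (IsCrossing A)) :
    HasBipartiteExpansion A d Γ := by
  obtain ⟨r₁, Γs₁, ε₁, hΓs₁, hε₁, hX₁, hsub₁⟩ := h₁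
  obtain ⟨r₂, Γs₂, ε₂, hΓs₂, hε₂, hX₂, hsub₂⟩ := h₂
  have hcross_le₁ (i) : Γ.filter (IsCrossing A) ≤ Γs₁ i := hle₁.trans (hsub₁ i)
  have hcross_le₂ (i) : Γ.filter (IsCrossing A) ≤ Γs₂ i := hle₂.trans (hsub₂ i)
  refine ⟨r₁ + r₂, Fin.append Γs₁ Γs₂, Fin.append ε₁ (-ε₂), ?_, ?_, ?_, ?_⟩
  · exact Fin.addCases (by simpa using hΓs₁) (by simpa using hΓs₂)
  · refine Fin.addCases (by simpa using hε₁) fun i => ?_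
    simpa [neg_eq_iff_eq_neg, or_comm] using hε₂ i
  · simp [hX, hX₁, hX₂, Fin.sum_univ_add, sub_eq_add_neg]
  · exact Fin.addCases (by simpa using hcross_le₁) (by simpa using hcross_le₂)

theorem hasBipartiteExpansion_of_regular (hA : A.card = Aᶜ.card) {Γ : DGraph n}
    (hloop : Γ.loopless) (hdeg : ∀ v, Γ.mdeg v = d) : HasBipartiteExpansion A d Γ := by
  have hbalance := countP_inside_eq_countP_outside hA hdeg
  induction hN : Γ.countP (fun e => e.1 ∈ A ∧ e.2 ∈ A) generalizing Γ with
  | zero =>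
    have hout := hbalance.symm.trans hN
    rw [Multiset.countP_eq_zero] at hN hout
    refine hasBipartiteExpansion_of_forall_isCrossing hloop hdeg fun e he => ?_
    have := hN e he
    have := hout e he
    tauto
  | succ N ih =>
    obtain ⟨⟨i, j⟩, hijΓ, hi, hj⟩ : ∃ e ∈ Γ, e.1 ∈ A ∧ e.2 ∈ A :=
      Multiset.countP_pos.mp (by omega)
    obtain ⟨⟨k, l⟩, hklΓ, hk, hl⟩ : ∃ e ∈ Γ, e.1 ∉ A ∧ e.2 ∉ A :=
      Multiset.countP_pos.mp (by omega)
    obtain ⟨Γ', rfl⟩ := Multiset.exists_cons_of_mem hijΓ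
    have hklΓ' : (k, l) ∈ Γ' :=
      (Multiset.mem_cons.mp hklΓ).resolve_left fun h => hk (congrArg Prod.fst h ▸ hi)
    obtain ⟨Γ₀, rfl⟩ := Multiset.exists_cons_of_mem hklΓ'
    have rewire (a b : Fin n) (ha : a ∉ A) (hb : b ∉ A)
        (hdeg' : ∀ v, mdeg ((i, a) ::ₘ (j, b) ::ₘ Γ₀) v = d) :
        HasBipartiteExpansion A d ((i, a) ::ₘ (j, b) ::ₘ Γ₀) := by
      refine ih ?_ hdeg' (countP_inside_eq_countP_outside hA hdeg') ?_
      · simp only [loopless_cons_iff] at hloop ⊢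
        exact ⟨ne_of_mem_of_not_mem hi ha, ne_of_mem_of_not_mem hj hb, hloop.2.2⟩
      · simp [hi, hj, hk, hl, ha, hb] at hN ⊢
        omega
    have hdeg_rewire (a b : Fin n) (hab : a = k ∧ b = l ∨ a = l ∧ b = k) (v : Fin n) :
        mdeg ((i, a) ::ₘ (j, b) ::ₘ Γ₀) v = d := by
      rw [← hdeg v]
      rcases hab with ⟨rfl, rfl⟩ | ⟨rfl, rfl⟩ <;>
        simp only [mdeg_cons] <;> split_ifs <;> omega
    have hcross_le (a b : Fin n) : ((i, j) ::ₘ (k, l) ::ₘ Γ₀).filter (IsCrossing A) ≤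
        ((i, a) ::ₘ (j, b) ::ₘ Γ₀).filter (IsCrossing A) := by
      rw [Multiset.filter_cons_of_neg _ (by simp [hi, hj]),
        Multiset.filter_cons_of_neg _ (by simp [hk, hl])]
      exact Multiset.filter_le_filter _
        ((Multiset.le_cons_self _ _).trans (Multiset.le_cons_self _ _))
    exact (rewire k l hk hl (hdeg_rewire k l (.inl ⟨rfl, rfl⟩))).of_XG_eq_sub
      (rewire l k hl hk (hdeg_rewire l k (.inr ⟨rfl, rfl⟩))) (XG_plucker i j k l Γ₀)
      (hcross_le k l) (hcross_le l k)

end DGraph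

/-- **Reduction to bipartite graphs via Plücker relations.** Let `n = 2m`, let
`A ⊔ Aᶜ` be a partition of the vertices with `|A| = m`, and let `Γ` have multidegree
`(d,…,d)`.  Then `X_Γ = Σ_i ε_i X_{Γ_i}` with `ε_i ∈ {±1}` and each `Γ_i` of multidegree
`(d,…,d)` all of whose edges join `A` to `Aᶜ`; moreover every edge of `Γ` joining `A` to
`Aᶜ` occurs (with its multiplicity) in every `Γ_i`. -/
theorem reduction_to_bipartite (m d : ℕ) (A : Finset (Fin (2 * m))) (hA : A.card = m)
    (Γ : DGraph (2 * m)) (hΓl : Γ.loopless) (hΓdeg : ∀ v, Γ.mdeg v = d) :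
    ∃ (r : ℕ) (Γs : Fin r → DGraph (2 * m)) (ε : Fin r → ℤ),
      (∀ i, (Γs i).loopless ∧ (∀ v, (Γs i).mdeg v = d) ∧
        ∀ e ∈ Γs i, (e.1 ∈ A ∧ e.2 ∉ A) ∨ (e.2 ∈ A ∧ e.1 ∉ A)) ∧
      (∀ i, ε i = 1 ∨ ε i = -1) ∧
      XG Γ = ∑ i, ε i • XG (Γs i) ∧
      ∀ i, Γ.filter (fun e => (e.1 ∈ A ∧ e.2 ∉ A) ∨ (e.2 ∈ A ∧ e.1 ∉ A)) ≤ Γs i := by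
  have hA' : A.card = Aᶜ.card := by
    rw [Finset.card_compl, Fintype.card_fin, hA]
    omega
  exact DGraph.hasBipartiteExpansion_of_regular hA' hΓl hΓdeg
end
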